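/- arXiv:2303.00581 — 9 statements merged into one kernel-verified Lean document; each statement's English description precedes it below -/
import Mathlib

section
/- Let A be a skew brace and X ⊆ A. The additive subgroup L(X) generated by the set {θ_{(a,b)}(x) : x ∈ X, a,b ∈ A}, where θ_{(a,b)}(x) = a + λ_b(x) - a, is the smallest strong left ideal of A containing X. -/
/-- A skew (left) brace structure on an additive group `(A,+)`: a second group
operation `mul` (with inverse `inv`) sharing the identity `0`, satisfying
`a ∘ (b + c) = a ∘ b - a + a ∘ c`. -/
structure SkewBrace (A : Type*) [AddGroup A] where
  mul : A → A → A
  inv : A → A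
  mul_assoc : ∀ a b c, mul (mul a b) c = mul a (mul b c)
  zero_mul : ∀ a, mul 0 a = a
  mul_zero : ∀ a, mul a 0 = a
  inv_mul : ∀ a, mul (inv a) a = 0
  left_compat : ∀ a b c, mul a (b + c) = mul a b + -a + mul a c

/-- A strong left ideal: a normal subgroup of `(A,+)` stable under every `λ_a`. -/
def IsStrongLeftIdeal {A : Type*} [AddGroup A] (S : SkewBrace A)
    (I : AddSubgroup A) : Prop :=
  I.Normal ∧ ∀ a : A, ∀ x ∈ I, -a + S.mul a x ∈ I

section aux
variable {A : Type*} [AddGroup A] (S : SkewBrace A)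

/-- λ_a as a function. -/
def SB.lam (a x : A) : A := -a + S.mul a x

lemma SB.lam_add (a x y : A) : SB.lam S a (x + y) = SB.lam S a x + SB.lam S a y := by
  simp only [SB.lam, S.left_compat]
  simp [add_assoc]

lemma SB.lam_zero (a : A) : SB.lam S a 0 = 0 := by
  simp [SB.lam, S.mul_zero]

lemma SB.lam_neg (a x : A) : SB.lam S a (-x) = -SB.lam S a x := by
  have h := SB.lam_add S a x (-x)
  rw [add_neg_cancel, SB.lam_zero] at h
  exact eq_neg_of_add_eq_zero_right h.symm

lemma SB.mul_neg (a b : A) : S.mul a (-b) = a - S.mul a b + a := by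
  have h := S.left_compat a b (-b)
  rw [add_neg_cancel, S.mul_zero] at h
  have h2 : S.mul a (-b) = -(S.mul a b + -a) + a := eq_neg_add_of_add_eq h.symm
  rw [h2]
  simp [neg_add, sub_eq_add_neg, add_assoc]

lemma SB.lam_lam (a b x : A) :
    SB.lam S a (SB.lam S b x) = SB.lam S (S.mul a b) x := by
  simp only [SB.lam]
  rw [S.left_compat, SB.mul_neg, ← S.mul_assoc]
  simp [sub_eq_add_neg, neg_add, add_assoc]

end aux

/-- The additive subgroup generated by `{θ_{(a,b)}(x) : x ∈ X, a b ∈ A}`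
is the smallest strong left ideal containing `X`. -/
theorem stmt_3 {A : Type*} [AddGroup A] (S : SkewBrace A) (X : Set A) :
    let L : AddSubgroup A :=
      AddSubgroup.closure {y | ∃ x ∈ X, ∃ a b : A, y = a + (-b + S.mul b x) - a}
    IsStrongLeftIdeal S L ∧ X ⊆ (L : Set A) ∧
      ∀ J : AddSubgroup A, IsStrongLeftIdeal S J → X ⊆ (J : Set A) → L ≤ J := by
  intro L
  set G : Set A := {y | ∃ x ∈ X, ∃ a b : A, y = a + (-b + S.mul b x) - a} with hG
  have hLdef : L = AddSubgroup.closure G := rfl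
  constructor
  · constructor
    · -- normality
      constructor
      intro n hn g
      have : g + n + -g ∈ L := by
        rw [hLdef] at hn ⊢
        induction hn using AddSubgroup.closure_induction with
        | mem y hy =>
          obtain ⟨x, hx, a, b, rfl⟩ := hy
          apply AddSubgroup.subset_closure
          exact ⟨x, hx, g + a, b, by
            simp [sub_eq_add_neg, neg_add, add_assoc]⟩
        | zero => simpa using AddSubgroup.zero_mem _
        | add y z hy hz ihy ihz =>
          have := AddSubgroup.add_mem _ ihy ihz
          have e : g + (y + z) + -g = (g + y + -g) + (g + z + -g) := by
            simp [add_assoc]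
          rw [e]; exact this
        | neg y hy ihy =>
          have := AddSubgroup.neg_mem _ ihy
          have e : g + (-y) + -g = -(g + y + -g) := by
            simp [neg_add, add_assoc]
          rw [e]; exact this
      exact this
    · -- λ-stability
      intro c x hx
      change SB.lam S c x ∈ L
      rw [hLdef] at hx ⊢
      induction hx using AddSubgroup.closure_induction with
      | mem y hy =>
        obtain ⟨x, hx, a, b, rfl⟩ := hy
        have : SB.lam S c (a + SB.lam S b x - a)
            = SB.lam S c a + SB.lam S (S.mul c b) x - SB.lam S c a := by
          rw [sub_eq_add_neg, SB.lam_add, SB.lam_add, SB.lam_neg, SB.lam_lam,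
            ← sub_eq_add_neg]
        rw [show (-b + S.mul b x) = SB.lam S b x from rfl]
        rw [this]
        apply AddSubgroup.subset_closure
        exact ⟨x, hx, SB.lam S c a, S.mul c b, rfl⟩
      | zero => simpa [SB.lam_zero] using AddSubgroup.zero_mem (AddSubgroup.closure G)
      | add y z hy hz ihy ihz =>
        rw [SB.lam_add]; exact AddSubgroup.add_mem _ ihy ihz
      | neg y hy ihy =>
        rw [SB.lam_neg]; exact AddSubgroup.neg_mem _ ihy
  constructor
  · intro x hx
    apply AddSubgroup.subset_closure
    exact ⟨x, hx, 0, 0, by simp [S.zero_mul]⟩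
  · intro J hJ hXJ
    rw [hLdef]
    rw [AddSubgroup.closure_le]
    rintro y ⟨x, hx, a, b, rfl⟩
    have h1 : -b + S.mul b x ∈ J := hJ.2 b x (hXJ hx)
    have h2 := hJ.1.conj_mem _ h1 a
    simpa [sub_eq_add_neg] using h2
end

section
/- Let (X,r) be a multipermutation solution with |X| > 1 satisfying condition (*): for every x ∈ X there exist y, y' ∈ X with σ_y(x) = x and τ_{y'}(x) = x. Then mpl(X,r) = mpl'(X,r) + 1. -/
/-- A non-degenerate set-theoretic solution of the Yang–Baxter equation:
`r(x,y) = (σ x y, τ y x)` with all `σ x`, `τ x` bijective, `r` bijective,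
and `r` satisfying the braid relation `r₁ r₂ r₁ = r₂ r₁ r₂`. -/
structure NDSolution (X : Type*) where
  σ : X → X → X
  τ : X → X → X
  σ_bij : ∀ x, Function.Bijective (σ x)
  τ_bij : ∀ x, Function.Bijective (τ x)
  r_bij : Function.Bijective (fun p : X × X => (σ p.1 p.2, τ p.2 p.1))
  braid : ∀ x y z : X,
    (let r1 : X × X × X → X × X × X := fun t => (σ t.1 t.2.1, τ t.2.1 t.1, t.2.2)
     let r2 : X × X × X → X × X × X := fun t => (t.1, σ t.2.1 t.2.2, τ t.2.2 t.2.1)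
     r1 (r2 (r1 (x, y, z))) = r2 (r1 (r2 (x, y, z))))

/-- The equivalence relation on `X` identifying points that become equal in the
`n`-th retraction `Ret^n(X,r)`; `retRel S 1` is `σ_x = σ_y ∧ τ_x = τ_y`. -/
def retRel {X : Type*} (S : NDSolution X) : ℕ → X → X → Prop
  | 0, x, y => x = y
  | n + 1, x, y =>
      (∀ z, retRel S n (S.σ x z) (S.σ y z)) ∧ (∀ z, retRel S n (S.τ x z) (S.τ y z))

/-- `Ret^n(X,r)` has exactly one element. -/
def retIsSingleton {X : Type*} (S : NDSolution X) (n : ℕ) : Prop :=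
  ∀ x y, retRel S n x y

/-- `Ret^n(X,r)` is a trivial solution, i.e. on `Ret^n(X,r)` one has
`r(x,y) = (y,x)`. -/
def retIsTrivial {X : Type*} (S : NDSolution X) (n : ℕ) : Prop :=
  ∀ x y, retRel S n (S.σ x y) y ∧ retRel S n (S.τ x y) y

/-! Under (*), `Ret^{n+1}` is a singleton exactly when `Ret^n` is trivial: if `Ret^n` is trivial,
all `σ_x` (and all `τ_x`) agree in `Ret^n`; conversely, if `σ_x ≡ σ_w` in `Ret^n` with `σ_w y = y`,
then `σ_x y ≡ y`. Since `|X| > 1`, `Ret^0` is not a singleton, so the two levels differ by one. -/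

namespace NDSolution

variable {X : Type*} (S : NDSolution X)

theorem retRel_symm : ∀ (n : ℕ) {x y : X}, retRel S n x y → retRel S n y x
  | 0, _, _, h => h.symm
  | n + 1, _, _, h => ⟨fun z => retRel_symm n (h.1 z), fun z => retRel_symm n (h.2 z)⟩

theorem retRel_trans : ∀ (n : ℕ) {x y z : X}, retRel S n x y → retRel S n y z → retRel S n x z
  | 0, _, _, _, h, h' => h.trans h'
  | n + 1, _, _, _, h, h' =>
    ⟨fun w => retRel_trans n (h.1 w) (h'.1 w), fun w => retRel_trans n (h.2 w) (h'.2 w)⟩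

theorem retIsSingleton_succ_of_retIsTrivial {n : ℕ} (ht : retIsTrivial S n) :
    retIsSingleton S (n + 1) := fun x y =>
  ⟨fun z => S.retRel_trans n (ht x z).1 (S.retRel_symm n (ht y z).1),
   fun z => S.retRel_trans n (ht x z).2 (S.retRel_symm n (ht y z).2)⟩

theorem retIsTrivial_of_retIsSingleton_succ
    (hstar : ∀ x : X, (∃ y, S.σ y x = x) ∧ (∃ y', S.τ y' x = x)) {n : ℕ}
    (hs : retIsSingleton S (n + 1)) : retIsTrivial S n := by
  intro x y
  obtain ⟨⟨w, hw⟩, ⟨w', hw'⟩⟩ := hstar y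
  exact ⟨by simpa only [hw] using (hs x w).1 y, by simpa only [hw'] using (hs x w').2 y⟩

theorem not_retIsSingleton_zero [Nontrivial X] : ¬ retIsSingleton S 0 := fun hs =>
  let ⟨a, b, hab⟩ := exists_pair_ne X
  hab (hs a b)

end NDSolution

theorem Nat.exists_isLeast_and_isLeast_succ {P Q : ℕ → Prop} (hP : ∃ n, P n) (hP0 : ¬ P 0)
    (hQP : ∀ n, Q n ↔ P (n + 1)) : ∃ m, IsLeast {n | Q n} m ∧ IsLeast {n | P n} (m + 1) := by
  classical
  obtain ⟨_ | n, hn⟩ := hP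
  · exact absurd hn hP0
  have hQ : ∃ n, Q n := ⟨n, (hQP n).2 hn⟩
  refine ⟨Nat.find hQ, Nat.isLeast_find hQ, (hQP _).1 (Nat.find_spec hQ), ?_⟩
  rintro (_ | k) hk
  · exact absurd hk hP0
  · exact Nat.succ_le_succ (Nat.find_min' hQ ((hQP k).2 hk))

/-- For a multipermutation solution with more than one element satisfying
condition (*) — every `x` is fixed by some `σ_y` and some `τ_{y'}` — one has
`mpl(X,r) = mpl'(X,r) + 1`. -/
theorem stmt_6 {X : Type*} [Nontrivial X] (S : NDSolution X)
    (hstar : ∀ x : X, (∃ y, S.σ y x = x) ∧ (∃ y', S.τ y' x = x))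
    (h : ∃ n, retIsSingleton S n) :
    ∃ m' : ℕ, IsLeast {n | retIsTrivial S n} m' ∧
      IsLeast {n | retIsSingleton S n} (m' + 1) :=
  Nat.exists_isLeast_and_isLeast_succ h S.not_retIsSingleton_zero fun _ =>
    ⟨S.retIsSingleton_succ_of_retIsTrivial, S.retIsTrivial_of_retIsSingleton_succ hstar⟩
end

section
/- Let A be a multipermutation skew brace (i.e., Soc_n(A) = A for some n) and suppose X ⊆ A generates A as a strong left ideal. Then X generates A as a skew brace (i.e., the smallest subskew brace of A containing X is A). -/
/-- The socle series of a skew brace, described by coset conditions: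
`Soc 0 = {0}` and `x ∈ Soc (n+1)` iff for all `a`, `x∘a ≡ x+a ≡ a+x` modulo
`Soc n`. -/
def socSet {A : Type*} [AddGroup A] (S : SkewBrace A) : ℕ → Set A
  | 0 => {0}
  | n + 1 => {x | ∀ a : A,
      S.mul x a - (x + a) ∈ socSet S n ∧ (x + a) - (a + x) ∈ socSet S n}

/-!
Let `T` be a subskew brace containing `X`. We show `A = T + Soc_k` by downward induction on
`k`; for `k = 0` this says `T = A`. Modulo `Soc_k`, an element `s` of `Soc_{k+1}` is central
and `λ_s` is trivial, so `a = t + s` with `t ∈ T` acts on `A / Soc_k`, by conjugation and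
through `λ`, exactly as `t` does. Hence if `A = T + Soc_{k+1}`, then `T + Soc_k` is a strong
left ideal containing `X`, so it is `A`. The socle series consists of ideals because the
preimage of the socle of `A / N` is an ideal whenever `N` is.
-/

namespace SkewBrace

variable {A : Type*} [AddGroup A] (S : SkewBrace A)

def lam (a : A) : A →+ A :=
  AddMonoidHom.mk' (fun x => -a + S.mul a x) fun x y => by simp [S.left_compat, add_assoc]

theorem lam_apply (a x : A) : S.lam a x = -a + S.mul a x := rfl

theorem mul_eq_add_lam (a x : A) : S.mul a x = a + S.lam a x := by
  rw [lam_apply, add_neg_cancel_left]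

theorem inv_inv (a : A) : S.inv (S.inv a) = a := by
  have h := S.mul_assoc (S.inv (S.inv a)) (S.inv a) a
  rwa [S.inv_mul, S.inv_mul, S.zero_mul, S.mul_zero, eq_comm] at h

theorem mul_inv (a : A) : S.mul a (S.inv a) = 0 := by
  simpa only [S.inv_inv] using S.inv_mul (S.inv a)

theorem lam_mul (a b c : A) : S.lam (S.mul a b) c = S.lam a (S.lam b c) := by
  rw [lam_apply, S.mul_assoc, S.mul_eq_add_lam b c, S.left_compat, S.lam_apply a]
  simp [add_assoc]

theorem lam_zero (c : A) : S.lam 0 c = c := by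
  rw [lam_apply, neg_zero, zero_add, S.zero_mul]

theorem lam_lam_inv (a c : A) : S.lam a (S.lam (S.inv a) c) = c := by
  rw [← lam_mul, mul_inv, lam_zero]

theorem add_eq_mul_lam_inv (a b : A) : a + b = S.mul a (S.lam (S.inv a) b) := by
  rw [mul_eq_add_lam, lam_lam_inv]

theorem lam_inv_self (a : A) : S.lam a (S.inv a) = -a := by
  rw [lam_apply, mul_inv, add_zero]

structure Ideal extends AddSubgroup A where
  normal : toAddSubgroup.Normal
  lam_mem : ∀ a {x}, x ∈ toAddSubgroup → S.lam a x ∈ toAddSubgroup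
  mul_conj_mem : ∀ a {x}, x ∈ toAddSubgroup → S.mul (S.mul a x) (S.inv a) ∈ toAddSubgroup

namespace Ideal

variable {S}

instance (N : S.Ideal) : N.toAddSubgroup.Normal := N.normal

instance : Bot S.Ideal where
  bot :=
    { toAddSubgroup := ⊥
      normal := inferInstance
      lam_mem := by
        rintro a x (rfl : x = 0)
        exact map_zero _
      mul_conj_mem := by
        rintro a x (rfl : x = 0)
        rw [S.mul_zero, S.mul_inv]
        rfl }

variable (N : S.Ideal)

theorem mk_lam_congr (a : A) {u v : A} (h : (u : A ⧸ N.toAddSubgroup) = v) :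
    (S.lam a u : A ⧸ N.toAddSubgroup) = S.lam a v := by
  rw [QuotientAddGroup.eq] at h ⊢
  simpa only [map_add, map_neg] using N.lam_mem a h

/-- Right multiplication descends to `A ⧸ N` because `N` is normal in `(A, ∘)`. -/
theorem mk_mul_congr_left {u v : A} (h : (u : A ⧸ N.toAddSubgroup) = v) (c : A) :
    (S.mul u c : A ⧸ N.toAddSubgroup) = S.mul v c := by
  set w := S.lam (S.inv v) (-v + u)
  have hw : w ∈ N.toAddSubgroup := N.lam_mem _ (QuotientAddGroup.eq.1 h.symm)
  have hu : u = S.mul v w := by rw [← add_eq_mul_lam_inv, add_neg_cancel_left]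
  have hw' : S.mul (S.mul (S.inv c) w) c ∈ N.toAddSubgroup := by
    simpa only [S.inv_inv] using N.mul_conj_mem (S.inv c) hw
  have hwc : S.mul w c = S.mul c (S.mul (S.mul (S.inv c) w) c) := by
    rw [← S.mul_assoc, ← S.mul_assoc, S.mul_inv, S.zero_mul]
  rw [hu, S.mul_assoc, hwc, ← S.mul_assoc, S.mul_eq_add_lam (S.mul v c), QuotientAddGroup.mk_add,
    (QuotientAddGroup.eq_zero_iff _).2 (N.lam_mem _ hw'), add_zero]

theorem mk_lam_index_congr {u v : A} (h : (u : A ⧸ N.toAddSubgroup) = v) (c : A) :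
    (S.lam u c : A ⧸ N.toAddSubgroup) = S.lam v c := by
  simp only [lam_apply, QuotientAddGroup.mk_add, QuotientAddGroup.mk_neg, h, N.mk_mul_congr_left h]

theorem mk_lam_of_mem {u : A} (hu : u ∈ N.toAddSubgroup) (c : A) :
    (S.lam u c : A ⧸ N.toAddSubgroup) = c := by
  have hu0 : (u : A ⧸ N.toAddSubgroup) = (0 : A) := by
    rwa [QuotientAddGroup.mk_zero, QuotientAddGroup.eq_zero_iff]
  rw [N.mk_lam_index_congr hu0, lam_zero]

def socleModSet : Set A :=
  {x | ∀ a, S.mul x a - (x + a) ∈ N.toAddSubgroup ∧ (x + a) - (a + x) ∈ N.toAddSubgroup}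

theorem mem_socleModSet_iff {x : A} :
    x ∈ N.socleModSet ↔ (∀ a, (S.lam x a : A ⧸ N.toAddSubgroup) = a) ∧
      ∀ a : A, AddCommute (x : A ⧸ N.toAddSubgroup) a := by
  simp only [socleModSet, Set.mem_ofPred_eq, ← QuotientAddGroup.eq_iff_sub_mem,
    QuotientAddGroup.mk_add, S.mul_eq_add_lam, add_right_inj, forall_and]
  rfl

variable {N}

theorem mem_socleModSet_of_mk_eq {u v : A} (hv : v ∈ N.socleModSet)
    (h : (u : A ⧸ N.toAddSubgroup) = v) : u ∈ N.socleModSet := by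
  rw [mem_socleModSet_iff] at hv ⊢
  exact ⟨fun a => (N.mk_lam_index_congr h a).trans (hv.1 a), fun a => h ▸ hv.2 a⟩

theorem mem_socleModSet_of_mem {x : A} (hx : x ∈ N.toAddSubgroup) : x ∈ N.socleModSet := by
  have hx0 : (x : A ⧸ N.toAddSubgroup) = 0 := (QuotientAddGroup.eq_zero_iff x).2 hx
  rw [mem_socleModSet_iff, hx0]
  exact ⟨N.mk_lam_of_mem hx, fun a => AddCommute.zero_left _⟩

theorem mul_mem_socleModSet {x y : A} (hx : x ∈ N.socleModSet) (hy : y ∈ N.socleModSet) :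
    S.mul x y ∈ N.socleModSet := by
  rw [mem_socleModSet_iff] at hx hy ⊢
  have hxy : (S.mul x y : A ⧸ N.toAddSubgroup) = x + y := by
    rw [S.mul_eq_add_lam, QuotientAddGroup.mk_add, hx.1 y]
  refine ⟨fun a => ?_, fun a => hxy ▸ (hx.2 a).add_left (hy.2 a)⟩
  rw [lam_mul]
  exact (N.mk_lam_congr x (hy.1 a)).trans (hx.1 a)

theorem mk_inv_of_mem_socleModSet {x : A} (hx : x ∈ N.socleModSet) :
    (S.inv x : A ⧸ N.toAddSubgroup) = -x := by
  have h := (N.mem_socleModSet_iff.1 hx).1 (S.inv x)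
  rw [lam_inv_self, QuotientAddGroup.mk_neg] at h
  exact h.symm

theorem inv_mem_socleModSet {x : A} (hx : x ∈ N.socleModSet) : S.inv x ∈ N.socleModSet := by
  have hx' := N.mem_socleModSet_iff.1 hx
  rw [mem_socleModSet_iff, mk_inv_of_mem_socleModSet hx]
  refine ⟨fun a => ?_, fun a => (hx'.2 a).neg_left⟩
  calc (S.lam (S.inv x) a : A ⧸ N.toAddSubgroup) = S.lam x (S.lam (S.inv x) a) := (hx'.1 _).symm
    _ = a := by rw [lam_lam_inv]

theorem add_mem_socleModSet {x y : A} (hx : x ∈ N.socleModSet) (hy : y ∈ N.socleModSet) :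
    x + y ∈ N.socleModSet := by
  rw [add_eq_mul_lam_inv]
  exact mul_mem_socleModSet hx
    (mem_socleModSet_of_mk_eq hy ((N.mem_socleModSet_iff.1 (inv_mem_socleModSet hx)).1 y))

theorem neg_mem_socleModSet {x : A} (hx : x ∈ N.socleModSet) : -x ∈ N.socleModSet :=
  mem_socleModSet_of_mk_eq (inv_mem_socleModSet hx)
    (by rw [QuotientAddGroup.mk_neg, mk_inv_of_mem_socleModSet hx])

theorem add_conj_mem_socleModSet (a : A) {x : A} (hx : x ∈ N.socleModSet) :
    a + x + -a ∈ N.socleModSet :=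
  mem_socleModSet_of_mk_eq hx (by
    rw [QuotientAddGroup.mk_add, QuotientAddGroup.mk_add, QuotientAddGroup.mk_neg,
      ← ((N.mem_socleModSet_iff.1 hx).2 a).eq, add_neg_cancel_right])

/-- `λ_b` descends to an automorphism of `A ⧸ N`, which preserves the centre. -/
theorem addCommute_mk_lam {x : A} (hx : x ∈ N.socleModSet) (b c : A) :
    AddCommute (S.lam b x : A ⧸ N.toAddSubgroup) c := by
  have key := N.mk_lam_congr b (u := x + S.lam (S.inv b) c) (v := S.lam (S.inv b) c + x) (by
    rw [QuotientAddGroup.mk_add, QuotientAddGroup.mk_add]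
    exact ((N.mem_socleModSet_iff.1 hx).2 _).eq)
  rwa [map_add, map_add, lam_lam_inv, QuotientAddGroup.mk_add, QuotientAddGroup.mk_add] at key

theorem mk_mul_conj_of_mem_socleModSet {x : A} (hx : x ∈ N.socleModSet) (b : A) :
    (S.mul (S.mul b x) (S.inv b) : A ⧸ N.toAddSubgroup) = S.lam b x := by
  rw [S.mul_assoc, S.mul_eq_add_lam, S.mul_eq_add_lam x, map_add, QuotientAddGroup.mk_add,
    QuotientAddGroup.mk_add, N.mk_lam_congr b ((N.mem_socleModSet_iff.1 hx).1 (S.inv b)),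
    lam_inv_self, QuotientAddGroup.mk_neg, ← add_assoc, ← (addCommute_mk_lam hx b b).eq,
    add_neg_cancel_right]

theorem lam_mem_socleModSet (b : A) {x : A} (hx : x ∈ N.socleModSet) :
    S.lam b x ∈ N.socleModSet := by
  rw [mem_socleModSet_iff]
  refine ⟨fun c => ?_, addCommute_mk_lam hx b⟩
  calc (S.lam (S.lam b x) c : A ⧸ N.toAddSubgroup)
      = S.lam (S.mul (S.mul b x) (S.inv b)) c :=
        (N.mk_lam_index_congr (mk_mul_conj_of_mem_socleModSet hx b) c).symm
    _ = S.lam b (S.lam x (S.lam (S.inv b) c)) := by rw [lam_mul, lam_mul]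
    _ = S.lam b (S.lam (S.inv b) c) :=
        N.mk_lam_congr b ((N.mem_socleModSet_iff.1 hx).1 _)
    _ = c := by rw [lam_lam_inv]

variable (N)

/-- The preimage of `Soc (A ⧸ N)`. -/
def socleMod : S.Ideal where
  carrier := N.socleModSet
  zero_mem' := mem_socleModSet_of_mem N.zero_mem
  add_mem' := add_mem_socleModSet
  neg_mem' := neg_mem_socleModSet
  normal := ⟨fun _ hx a => add_conj_mem_socleModSet a hx⟩
  lam_mem b _ hx := lam_mem_socleModSet b hx
  mul_conj_mem b _ hx :=
    mem_socleModSet_of_mk_eq (lam_mem_socleModSet b hx) (mk_mul_conj_of_mem_socleModSet hx b)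

theorem isStrongLeftIdeal_comap_map {T : AddSubgroup A}
    (hTmul : ∀ a ∈ T, ∀ b ∈ T, S.mul a b ∈ T)
    (hT : ∀ a : A, ∃ t ∈ T, (t : A ⧸ N.socleMod.toAddSubgroup) = a) :
    IsStrongLeftIdeal S ((T.map (QuotientAddGroup.mk' N.toAddSubgroup)).comap
      (QuotientAddGroup.mk' N.toAddSubgroup)) := by
  have hdecomp : ∀ a, ∃ t ∈ T, ∃ s ∈ N.socleModSet, a = t + s := fun a => by
    obtain ⟨t, ht, hta⟩ := hT a
    exact ⟨t, ht, -t + a, QuotientAddGroup.eq.1 hta, (add_neg_cancel_left t a).symm⟩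
  refine ⟨⟨fun x hx a => ?_⟩, fun a x hx => ?_⟩ <;>
    simp only [AddSubgroup.mem_comap, AddSubgroup.mem_map, QuotientAddGroup.mk'_apply] at hx ⊢ <;>
    obtain ⟨t, ht, htx⟩ := hx
  · obtain ⟨t', ht', s, hs, rfl⟩ := hdecomp a
    refine ⟨t' + t + -t', T.add_mem (T.add_mem ht' ht) (T.neg_mem ht'), ?_⟩
    simp only [QuotientAddGroup.mk_add, QuotientAddGroup.mk_neg, neg_add_rev, ← htx]
    rw [add_assoc (t' : A ⧸ N.toAddSubgroup) s t, ((N.mem_socleModSet_iff.1 hs).2 t).eq]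
    simp only [add_assoc, add_neg_cancel_left]
  · obtain ⟨t', ht', s, hs, rfl⟩ := hdecomp a
    refine ⟨S.lam t' t, T.add_mem (T.neg_mem ht') (hTmul _ ht' _ ht), ?_⟩
    calc (S.lam t' t : A ⧸ N.toAddSubgroup)
        = S.lam t' (S.lam (S.lam (S.inv t') s) t) :=
          (N.mk_lam_congr t' ((N.mem_socleModSet_iff.1 (lam_mem_socleModSet _ hs)).1 t)).symm
      _ = S.lam (t' + s) t := by rw [add_eq_mul_lam_inv, lam_mul]
      _ = S.lam (t' + s) x := N.mk_lam_congr _ htx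

theorem exists_mk_eq_of_socleMod {X : Set A}
    (hgen : ∀ I : AddSubgroup A, IsStrongLeftIdeal S I → X ⊆ (I : Set A) → I = ⊤)
    {T : AddSubgroup A} (hTmul : ∀ a ∈ T, ∀ b ∈ T, S.mul a b ∈ T) (hXT : X ⊆ T)
    (hT : ∀ a : A, ∃ t ∈ T, (t : A ⧸ N.socleMod.toAddSubgroup) = a) (a : A) :
    ∃ t ∈ T, (t : A ⧸ N.toAddSubgroup) = a := by
  have htop := hgen _ (N.isStrongLeftIdeal_comap_map hTmul hT) fun x hx => ⟨x, hXT hx, rfl⟩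
  simpa only [AddSubgroup.mem_comap, AddSubgroup.mem_map, QuotientAddGroup.mk'_apply] using
    (AddSubgroup.eq_top_iff' _).1 htop a

end Ideal

def socle : ℕ → S.Ideal
  | 0 => ⊥
  | k + 1 => (socle k).socleMod

theorem coe_socle (k : ℕ) : ((S.socle k).toAddSubgroup : Set A) = socSet S k := by
  induction k with
  | zero => rfl
  | succ k ih =>
    simp only [socSet, ← ih]
    rfl

end SkewBrace

/-- A subset of a multipermutation skew brace generating it as a strong left
ideal generates it as a skew brace. -/
theorem stmt_7 {A : Type*} [AddGroup A] (S : SkewBrace A)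
    (hmp : ∃ n, socSet S n = Set.univ) (X : Set A)
    (hgen : ∀ I : AddSubgroup A, IsStrongLeftIdeal S I → X ⊆ (I : Set A) → I = ⊤) :
    ∀ T : Set A, (0 : A) ∈ T →
      (∀ a ∈ T, ∀ b ∈ T, a + b ∈ T) → (∀ a ∈ T, -a ∈ T) →
      (∀ a ∈ T, ∀ b ∈ T, S.mul a b ∈ T) → (∀ a ∈ T, S.inv a ∈ T) →
      X ⊆ T → T = Set.univ := by
  intro T hT0 hTadd hTneg hTmul _ hXT
  obtain ⟨n, hn⟩ := hmp
  let T' : AddSubgroup A :=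
    { carrier := T
      add_mem' := fun ha hb => hTadd _ ha _ hb
      zero_mem' := hT0
      neg_mem' := fun ha => hTneg _ ha }
  -- `A = T + Soc_k`, by downward induction on `k`
  have hsoc : ∀ k ≤ n, ∀ a : A, ∃ t ∈ T', (t : A ⧸ (S.socle k).toAddSubgroup) = a := by
    intro k hk
    induction hk using Nat.decreasingInduction with
    | self =>
      intro a
      refine ⟨0, T'.zero_mem, ?_⟩
      rw [QuotientAddGroup.mk_zero, eq_comm, QuotientAddGroup.eq_zero_iff, ← SetLike.mem_coe,
        S.coe_socle, hn]
      trivial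
    | of_succ k _ ih => exact (S.socle k).exists_mk_eq_of_socleMod hgen hTmul hXT ih
  refine Set.eq_univ_of_forall fun a => ?_
  obtain ⟨t, ht, hta⟩ := hsoc 0 n.zero_le a
  rwa [← neg_add_eq_zero.1 (AddSubgroup.mem_bot.1 (QuotientAddGroup.eq.1 hta))]
end

section
/- Let F_n be the subring of ℤ[x]/(x^{n+1}) generated by x. Then F_n is a nilpotent ring with F_n^n ≠ 0 and F_n^{n+1} = 0, the additive group (F_n,+) is free abelian with basis x, x², ..., x^n, and the adjoint group (F_n,∘) with a∘b = a + ab + b is a free abelian group of rank n. -/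
open Polynomial AdjoinRoot

noncomputable section Stmt10Aux
namespace Stmt10Aux

variable (n : ℕ)

abbrev g : ℤ[X] := X ^ (n+1)

lemma hg : (g n).Monic := monic_X_pow _

abbrev Rn := AdjoinRoot (g n)

def ξ : Rn n := root (g n)

/-- coefficient functionals -/
def co (i : ℕ) (a : Rn n) : ℤ := (modByMonicHom (hg n) a).coeff i

variable {n}

lemma co_zero (i : ℕ) : co n i 0 = 0 := by simp [co]

lemma co_add (i : ℕ) (a b : Rn n) : co n i (a + b) = co n i a + co n i b := by
  simp [co, map_add]

lemma co_smul (i : ℕ) (c : ℤ) (a : Rn n) : co n i (c • a) = c * co n i a := by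
  show ((modByMonicHom (hg n)) (c • a)).coeff i = _
  rw [map_smul, coeff_smul, smul_eq_mul]
  rfl

lemma co_sum {ι : Type*} (s : Finset ι) (f : ι → Rn n) (i : ℕ) :
    co n i (∑ j ∈ s, f j) = ∑ j ∈ s, co n i (f j) := by
  classical
  induction s using Finset.cons_induction with
  | empty => simp [co_zero]
  | cons a s ha ih => rw [Finset.sum_cons, Finset.sum_cons, co_add, ih]

lemma xi_pow_mk (k : ℕ) : (ξ n) ^ k = mk (g n) (X ^ k) := by
  simp [ξ, map_pow, mk_X]

lemma co_xi_pow {i k : ℕ} (hk : k ≤ n) : co n i ((ξ n) ^ k) = if i = k then 1 else 0 := by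
  rw [xi_pow_mk, co, modByMonicHom_mk, (modByMonic_eq_self_iff (hg n)).2, coeff_X_pow]
  · simp [degree_X_pow]
    exact_mod_cast Nat.lt_succ_of_le hk

lemma xi_pow_top : (ξ n) ^ (n+1) = 0 := by
  rw [xi_pow_mk]; exact mk_self

lemma co_one (i : ℕ) : co n i 1 = if i = 0 then 1 else 0 := by
  simpa using co_xi_pow (k := 0) (Nat.zero_le n)

lemma mk_C_smul (c : ℤ) (a : Rn n) : mk (g n) (C c) * a = c • a := by
  have : (mk (g n)) (C c) = (c : Rn n) := by
    have h := map_intCast (mk (g n)) c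
    rw [show ((c : ℤ[X])) = C c by simp] at h
    exact h
  rw [this, zsmul_eq_mul]

lemma sum_co (a : Rn n) : a = ∑ i : Fin (n+1), co n i a • (ξ n) ^ (i : ℕ) := by
  induction a using AdjoinRoot.induction_on with
  | ih p =>
    have h1 : ∑ i : Fin (n+1), monomial (i:ℕ) ((p %ₘ g n).coeff i) = p %ₘ g n :=
      sum_modByMonic_coeff (hg n) (by simpa [degree_X_pow] using le_refl ((n:WithBot ℕ)+1))
    have h2 : mk (g n) (p %ₘ g n) = mk (g n) p := by
      rw [modByMonic_eq_sub_mul_div _ (g n), map_sub, map_mul, mk_self, zero_mul, sub_zero]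
    calc mk (g n) p = mk (g n) (p %ₘ g n) := h2.symm
      _ = ∑ i : Fin (n+1), co n i (mk (g n) p) • (ξ n) ^ (i:ℕ) := by
          rw [← h1, map_sum]
          refine Finset.sum_congr rfl fun i _ => ?_
          rw [co, modByMonicHom_mk, ← C_mul_X_pow_eq_monomial, map_mul, xi_pow_mk, mk_C_smul,
            ← xi_pow_mk]


/-! ### span lemmas -/

lemma co_high {a : Rn n} {i : ℕ} (hi : n + 1 ≤ i) : co n i a = 0 := by
  induction a using AdjoinRoot.induction_on with
  | ih p =>
    rw [co, modByMonicHom_mk]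
    refine coeff_eq_zero_of_degree_lt (lt_of_lt_of_le (degree_modByMonic_lt _ (hg n)) ?_)
    rw [degree_X_pow]
    exact_mod_cast hi

lemma co_eq_zero_of_mem {a : Rn n} {m i : ℕ} (him : i < m)
    (h : a ∈ Ideal.span {(ξ n) ^ m}) : co n i a = 0 := by
  rcases le_or_gt i n with hin | hin
  · obtain ⟨b, rfl⟩ := Ideal.mem_span_singleton'.1 h
    induction b using AdjoinRoot.induction_on with
    | ih q =>
      rw [xi_pow_mk, ← map_mul, co, modByMonicHom_mk, modByMonic_eq_sub_mul_div _ (g n),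
        coeff_sub, coeff_mul_X_pow', if_neg (by omega)]
      have h2 : (g n) * (q * X ^ m /ₘ g n) = (q * X ^ m /ₘ g n) * X ^ (n+1) := by
        rw [mul_comm]
      rw [h2, coeff_mul_X_pow', if_neg (by omega), sub_zero]
  · exact co_high (by omega)

lemma mem_of_co_eq_zero {a : Rn n} {m : ℕ} (h : ∀ i < m, co n i a = 0) :
    a ∈ Ideal.span {(ξ n) ^ m} := by
  rw [sum_co a]
  refine Submodule.sum_mem _ fun i _ => ?_
  by_cases hi : (i : ℕ) < m
  · rw [h i hi, zero_smul]; exact zero_mem _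
  · exact zsmul_mem (Ideal.mem_span_singleton.2 (pow_dvd_pow (ξ n) (not_lt.1 hi))) _

lemma span_mul_span {a b : Rn n} {p q : ℕ} (ha : a ∈ Ideal.span {(ξ n) ^ p})
    (hb : b ∈ Ideal.span {(ξ n) ^ q}) : a * b ∈ Ideal.span {(ξ n) ^ (p+q)} := by
  obtain ⟨a', rfl⟩ := Ideal.mem_span_singleton'.1 ha
  obtain ⟨b', rfl⟩ := Ideal.mem_span_singleton'.1 hb
  exact Ideal.mem_span_singleton'.2 ⟨a' * b', by rw [pow_add]; ring⟩

lemma span_mono' {p q : ℕ} (h : p ≤ q) :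
    Ideal.span {(ξ n) ^ q} ≤ Ideal.span {(ξ n) ^ p} :=
  Ideal.span_singleton_le_span_singleton.2 (pow_dvd_pow _ h)

lemma eq_zero_of_mem_top {a : Rn n} (h : a ∈ Ideal.span {(ξ n) ^ (n+1)}) : a = 0 := by
  obtain ⟨b, rfl⟩ := Ideal.mem_span_singleton'.1 h
  rw [xi_pow_top, mul_zero]

lemma pow_nilpotent {a : Rn n} (ha : a ∈ Ideal.span {ξ n}) : a ^ (n+1) = 0 := by
  obtain ⟨b, rfl⟩ := Ideal.mem_span_singleton'.1 ha
  rw [mul_pow, xi_pow_top, mul_zero]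

/-! ### units -/

def gs (a : Rn n) : Rn n := ∑ i ∈ Finset.range (n+1), (-a) ^ (i+1)

lemma gs_mem {a : Rn n} {m : ℕ} (ha : a ∈ Ideal.span {(ξ n) ^ m}) :
    gs a ∈ Ideal.span {(ξ n) ^ m} := by
  refine Submodule.sum_mem _ fun i _ => ?_
  rw [pow_succ]
  exact Ideal.mul_mem_left _ _ (neg_mem ha)

lemma unit_key {a : Rn n} (ha : a ∈ Ideal.span {ξ n}) : (1 + a) * (1 + gs a) = 1 := by
  have h1 : 1 + gs a = ∑ i ∈ Finset.range (n+2), (-a) ^ i := by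
    rw [Finset.sum_range_succ' (fun i => (-a)^i) (n+1)]
    simp [gs, add_comm]
  have hz : (-a) ^ (n+2) = 0 := by
    rw [show n+2 = (n+1)+1 from rfl, pow_succ, neg_pow, pow_nilpotent ha, mul_zero, zero_mul]
  have h2 : (∑ i ∈ Finset.range (n+2), (-a) ^ i) * (-a-1) = -1 := by
    rw [geom_sum_mul, hz]; ring
  rw [h1]
  linear_combination (-1 : Rn n) * h2

def unitOf (a : Rn n) (ha : a ∈ Ideal.span {ξ n}) : (Rn n)ˣ :=
  ⟨1 + a, 1 + gs a, unit_key ha, by rw [mul_comm]; exact unit_key ha⟩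

@[simp] lemma unitOf_val (a : Rn n) (ha : a ∈ Ideal.span {ξ n}) :
    ((unitOf a ha : (Rn n)ˣ) : Rn n) = 1 + a := rfl

variable (n) in
def Hgrp (m : ℕ) : Subgroup (Rn n)ˣ where
  carrier := {v : (Rn n)ˣ | (v : Rn n) - 1 ∈ Ideal.span {(ξ n) ^ (m+1)}}
  one_mem' := by
    simp only [Set.mem_setOf_eq, Units.val_one, sub_self]
    exact zero_mem _
  mul_mem' := by
    intro v w hv hw
    have hkey : ((v*w : (Rn n)ˣ) : Rn n) - 1
        = ((v:Rn n) - 1) + ((w:Rn n) - 1) + ((v:Rn n) - 1) * ((w:Rn n) - 1) := by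
      rw [Units.val_mul]; ring
    show _ ∈ _
    rw [Set.mem_setOf_eq, hkey]
    exact add_mem (add_mem hv hw) (Ideal.mul_mem_left _ _ hw)
  inv_mem' := by
    intro v hv
    have hv1 : (v : Rn n) - 1 ∈ Ideal.span {ξ n} := by
      have := span_mono' (n := n) (p := 1) (q := m+1) (by omega) hv
      rwa [pow_one] at this
    have hvo : v = unitOf ((v:Rn n) - 1) hv1 := Units.ext (by rw [unitOf_val]; ring)
    simp only [Set.mem_setOf_eq]
    rw [hvo]
    show (1 + gs ((v:Rn n) - 1)) - 1 ∈ _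
    rw [add_sub_cancel_left]
    exact gs_mem hv

lemma Hgrp_mono {m k : ℕ} (h : m ≤ k) : Hgrp n k ≤ Hgrp n m := fun v hv =>
  span_mono' (by omega) hv

lemma mem_Hgrp {v : (Rn n)ˣ} {m : ℕ} :
    v ∈ Hgrp n m ↔ (v : Rn n) - 1 ∈ Ideal.span {(ξ n) ^ (m+1)} := Iff.rfl

variable (n) in
def uu (k : ℕ) : (Rn n)ˣ :=
  unitOf ((ξ n) ^ (k+1)) (Ideal.mem_span_singleton.2 (dvd_pow_self _ (Nat.succ_ne_zero k)))

lemma uu_val (k : ℕ) : ((uu n k : (Rn n)ˣ) : Rn n) = 1 + (ξ n) ^ (k+1) := rfl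

lemma uu_mem (k : ℕ) : uu n k ∈ Hgrp n k := by
  rw [mem_Hgrp, uu_val, add_sub_cancel_left]
  exact Ideal.mem_span_singleton.2 dvd_rfl

variable (n) in
def phi (m : ℕ) : Hgrp n m →* Multiplicative ℤ where
  toFun v := Multiplicative.ofAdd (co n (m+1) (((v : (Rn n)ˣ) : Rn n) - 1))
  map_one' := by
    show Multiplicative.ofAdd (co n (m+1) ((((1 : Hgrp n m) : (Rn n)ˣ) : Rn n) - 1)) = 1
    have h0 : ((((1 : Hgrp n m) : (Rn n)ˣ)) : Rn n) - 1 = 0 := by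
      rw [OneMemClass.coe_one, Units.val_one, sub_self]
    rw [h0, co_zero]
    rfl
  map_mul' v w := by
    have hkey : (((↑(v*w) : (Rn n)ˣ)) : Rn n) - 1
        = (((v:(Rn n)ˣ):Rn n) - 1) + (((w:(Rn n)ˣ):Rn n) - 1)
          + ((((v:(Rn n)ˣ):Rn n)) - 1) * ((((w:(Rn n)ˣ):Rn n)) - 1) := by
      rw [Subgroup.coe_mul, Units.val_mul]; ring
    have hprod : co n (m+1)
        (((((v:(Rn n)ˣ):Rn n)) - 1) * ((((w:(Rn n)ˣ):Rn n)) - 1)) = 0 :=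
      co_eq_zero_of_mem (by omega) (span_mul_span v.2 w.2)
    show Multiplicative.ofAdd _ = Multiplicative.ofAdd _ * Multiplicative.ofAdd _
    rw [← ofAdd_add]
    exact congrArg Multiplicative.ofAdd (by rw [hkey, co_add, co_add, hprod, add_zero])


/-! ### Psi -/

variable (n) in
def Psi (c : Fin n → ℤ) : (Rn n)ˣ := ∏ k : Fin n, (uu n (k : ℕ)) ^ (c k)

lemma Psi_add (c d : Fin n → ℤ) : Psi n (c + d) = Psi n c * Psi n d := by
  rw [Psi, Psi, Psi, ← Finset.prod_mul_distrib]
  exact Finset.prod_congr rfl fun k _ => zpow_add _ _ _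

lemma Psi_zero : Psi n (0 : Fin n → ℤ) = 1 := by simp [Psi]

lemma Psi_single (k : Fin n) (d : ℤ) : Psi n (Pi.single k d) = (uu n (k:ℕ)) ^ d := by
  classical
  rw [Psi, Finset.prod_eq_single k]
  · rw [Pi.single_eq_same]
  · intro j _ hj
    rw [Pi.single_eq_of_ne hj, zpow_zero]
  · intro h
    exact absurd (Finset.mem_univ k) h

lemma Psi_mem {c : Fin n → ℤ} {m : ℕ} (hc : ∀ k : Fin n, (k:ℕ) < m → c k = 0) :
    Psi n c ∈ Hgrp n m := by
  refine Subgroup.prod_mem _ fun k _ => ?_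
  rcases lt_or_ge (k:ℕ) m with hk | hk
  · rw [hc k hk, zpow_zero]; exact one_mem _
  · exact Subgroup.zpow_mem _ (Hgrp_mono hk (uu_mem (k:ℕ))) _

lemma phi_uu {m k : ℕ} (hkm : m ≤ k) :
    phi n m ⟨uu n k, Hgrp_mono hkm (uu_mem k)⟩
      = Multiplicative.ofAdd (co n (m+1) ((ξ n) ^ (k+1))) := by
  show Multiplicative.ofAdd (co n (m+1) (((uu n k : (Rn n)ˣ) : Rn n) - 1)) = _
  rw [uu_val, add_sub_cancel_left]

lemma toAdd_phi_zpow {m k : ℕ} (hkm : m ≤ k) (e : ℤ) :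
    Multiplicative.toAdd
      (phi n m ((⟨uu n k, Hgrp_mono hkm (uu_mem k)⟩ : Hgrp n m) ^ e))
      = e * co n (m+1) ((ξ n) ^ (k+1)) := by
  rw [map_zpow, phi_uu hkm]
  simp only [toAdd_zpow, toAdd_ofAdd, smul_eq_mul]
  try ring

lemma co_Psi {c : Fin n → ℤ} {m : ℕ} (hm : m < n)
    (hc : ∀ k : Fin n, (k:ℕ) < m → c k = 0) :
    co n (m+1) (((Psi n c : (Rn n)ˣ) : Rn n) - 1) = c ⟨m, hm⟩ := by
  classical
  set w : Hgrp n m := ∏ k : Fin n,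
    (if hk : (k:ℕ) < m then 1
     else (⟨uu n (k:ℕ), Hgrp_mono (le_of_not_gt hk) (uu_mem (k:ℕ))⟩ : Hgrp n m) ^ (c k))
    with hwdef
  have hw : ((w : (Rn n)ˣ) : (Rn n)ˣ) = Psi n c := by
    rw [hwdef, Psi, SubmonoidClass.coe_finset_prod]
    refine Finset.prod_congr rfl fun k _ => ?_
    by_cases hk : (k:ℕ) < m
    · rw [dif_pos hk, hc k hk, zpow_zero, OneMemClass.coe_one]
    · rw [dif_neg hk, SubgroupClass.coe_zpow]
  have hphi : Multiplicative.toAdd (phi n m w) = c ⟨m, hm⟩ := by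
    rw [hwdef, map_prod, toAdd_prod]
    have hterm : ∀ k : Fin n, Multiplicative.toAdd ((phi n m)
        (if hk : (k:ℕ) < m then 1
         else (⟨uu n (k:ℕ), Hgrp_mono (le_of_not_gt hk) (uu_mem (k:ℕ))⟩ : Hgrp n m) ^ (c k)))
        = if k = ⟨m, hm⟩ then c k else 0 := by
      intro k
      by_cases hk : (k:ℕ) < m
      · rw [dif_pos hk, map_one, toAdd_one,
          if_neg (by intro h; rw [h] at hk; simp at hk)]
      · rw [dif_neg hk, toAdd_phi_zpow (le_of_not_gt hk),
          co_xi_pow (Nat.succ_le_of_lt k.isLt)]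
        by_cases hkm : k = (⟨m, hm⟩ : Fin n)
        · rw [if_pos (by rw [hkm]), if_pos hkm, mul_one]
        · rw [if_neg (fun h => hkm (Fin.ext (show (k:ℕ) = m by omega))), if_neg hkm, mul_zero]
    rw [Finset.sum_congr rfl (fun k _ => hterm k),
      Finset.sum_ite_eq' Finset.univ (⟨m, hm⟩ : Fin n) c, if_pos (Finset.mem_univ _)]
  have hfin : phi n m w = Multiplicative.ofAdd
      (co n (m+1) (((Psi n c : (Rn n)ˣ) : Rn n) - 1)) := by
    rw [← hw]; rfl
  rw [hfin, toAdd_ofAdd] at hphi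
  exact hphi


/-! ### main induction -/

lemma main : ∀ (t m : ℕ), m + t = n → ∀ a : Rn n, a ∈ Ideal.span {(ξ n) ^ (m+1)} →
    ∃! c : Fin n → ℤ,
      (∀ k : Fin n, (k:ℕ) < m → c k = 0) ∧ ((Psi n c : (Rn n)ˣ) : Rn n) = 1 + a := by
  intro t
  induction t with
  | zero =>
    intro m hm a ha
    have hmn : m = n := by omega
    subst hmn
    have ha0 : a = 0 := eq_zero_of_mem_top ha
    subst ha0
    refine ⟨0, ⟨fun k _ => rfl, by rw [Psi_zero, Units.val_one, add_zero]⟩, ?_⟩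
    rintro c ⟨hc0, -⟩
    funext k
    exact hc0 k k.isLt
  | succ t ih =>
    intro m hm a ha
    have hmn : m < n := by omega
    set d := co n (m+1) a with hd
    have ha1 : a ∈ Ideal.span {ξ n} := by
      have := span_mono' (n := n) (p := 1) (q := m+1) (by omega) ha
      rwa [pow_one] at this
    have hva_mem : unitOf a ha1 ∈ Hgrp n m := by
      rw [mem_Hgrp, unitOf_val, add_sub_cancel_left]; exact ha
    set v : (Rn n)ˣ := (uu n m) ^ (-d) * unitOf a ha1 with hv
    have hv_mem : v ∈ Hgrp n m :=
      mul_mem (Subgroup.zpow_mem _ (uu_mem m) _) hva_mem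
    have hphiv : co n (m+1) ((v : Rn n) - 1) = 0 := by
      have hsplit : (⟨v, hv_mem⟩ : Hgrp n m)
          = (⟨uu n m, Hgrp_mono le_rfl (uu_mem m)⟩ : Hgrp n m) ^ (-d)
            * ⟨unitOf a ha1, hva_mem⟩ := by
        apply Subtype.ext
        rw [Subgroup.coe_mul, SubgroupClass.coe_zpow]
      have h1 := congrArg Multiplicative.toAdd (congrArg (phi n m) hsplit)
      rw [map_mul, toAdd_mul, toAdd_phi_zpow le_rfl, co_xi_pow (by omega : m+1 ≤ n),
        if_pos rfl, mul_one] at h1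
      have h2 : Multiplicative.toAdd (phi n m ⟨unitOf a ha1, hva_mem⟩) = d := by
        show co n (m+1) ((1 + a) - 1) = d
        rw [add_sub_cancel_left]
      rw [h2] at h1
      have h3 : Multiplicative.toAdd (phi n m ⟨v, hv_mem⟩) = co n (m+1) ((v : Rn n) - 1) := rfl
      rw [h3] at h1
      omega
    have hco_v : ∀ i < m+2, co n i ((v : Rn n) - 1) = 0 := by
      intro i hi
      rcases Nat.lt_or_ge i (m+1) with hi' | hi'
      · exact co_eq_zero_of_mem hi' hv_mem
      · have : i = m+1 := by omega
        subst this
        exact hphiv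
    have ha' : (v : Rn n) - 1 ∈ Ideal.span {(ξ n) ^ ((m+1)+1)} :=
      mem_of_co_eq_zero (by intro i hi; exact hco_v i (by omega))
    obtain ⟨c', ⟨hc'0, hc'v⟩, hc'uniq⟩ := ih (m+1) (by omega) ((v : Rn n) - 1) ha'
    have hPsic' : Psi n c' = v := Units.ext (by rw [hc'v]; ring)
    have husingle : Psi n (Pi.single (⟨m, hmn⟩ : Fin n) d) = (uu n m) ^ d := by
      rw [Psi_single]
    refine ⟨c' + Pi.single (⟨m, hmn⟩ : Fin n) d, ⟨?_, ?_⟩, ?_⟩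
    · intro k hk
      have hne : k ≠ (⟨m, hmn⟩ : Fin n) := fun h => by
        have := congrArg Fin.val h
        simp at this
        omega
      rw [Pi.add_apply, hc'0 k (by omega), Pi.single_eq_of_ne hne, add_zero]
    · rw [Psi_add, husingle, hPsic', hv]
      have : (uu n m) ^ (-d) * unitOf a ha1 * (uu n m) ^ d = unitOf a ha1 := by
        rw [mul_comm ((uu n m) ^ (-d)) (unitOf a ha1), mul_assoc, ← zpow_add,
          neg_add_cancel, zpow_zero, mul_one]
      rw [this, unitOf_val]
    · rintro c₂ ⟨h20, h2v⟩
      have hd2 : c₂ ⟨m, hmn⟩ = d := by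
        have := co_Psi hmn h20
        rw [h2v, add_sub_cancel_left] at this
        rw [← this]
      set c₂' := c₂ - Pi.single (⟨m, hmn⟩ : Fin n) d with hc₂'
      have h2'0 : ∀ k : Fin n, (k:ℕ) < m+1 → c₂' k = 0 := by
        intro k hk
        rcases Nat.lt_or_ge (k:ℕ) m with hk' | hk'
        · have hne : k ≠ (⟨m, hmn⟩ : Fin n) := fun h => by
            have := congrArg Fin.val h
            simp at this
            omega
          rw [hc₂', Pi.sub_apply, h20 k hk', Pi.single_eq_of_ne hne, sub_zero]
        · have hkm : k = (⟨m, hmn⟩ : Fin n) := Fin.ext (show (k:ℕ) = m by omega)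
          rw [hc₂', Pi.sub_apply, hkm, Pi.single_eq_same, hd2, sub_self]
      have h2'v : ((Psi n c₂' : (Rn n)ˣ) : Rn n) = 1 + ((v : Rn n) - 1) := by
        have hsum : c₂' + Pi.single (⟨m, hmn⟩ : Fin n) d = c₂ := by
          rw [hc₂', sub_add_cancel]
        have := Psi_add c₂' (Pi.single (⟨m, hmn⟩ : Fin n) d)
        rw [hsum, husingle] at this
        have hPsi2 : Psi n c₂' = v := by
          have hu : Psi n c₂ = unitOf a ha1 := Units.ext (by rw [h2v, unitOf_val])
          rw [hu] at this
          rw [hv, this, mul_comm ((uu n m) ^ (-d)), mul_assoc, ← zpow_add,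
            add_neg_cancel, zpow_zero, mul_one]
        rw [hPsi2]; ring
      have heq := hc'uniq c₂' ⟨h2'0, h2'v⟩
      rw [← sub_add_cancel c₂ (Pi.single (⟨m, hmn⟩ : Fin n) d), ← hc₂', heq]


/-! ### F as closure -/

lemma xi_pow_mem_closure (k : ℕ) : (ξ n)^(k+1) ∈ NonUnitalSubring.closure {ξ n} := by
  induction k with
  | zero =>
    rw [pow_one]
    exact NonUnitalSubring.subset_closure rfl
  | succ k ih =>
    rw [pow_succ]
    exact mul_mem ih (NonUnitalSubring.subset_closure rfl)

variable (n) in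
def spanNus : NonUnitalSubring (Rn n) where
  carrier := Ideal.span {ξ n}
  zero_mem' := zero_mem _
  add_mem' := fun ha hb => add_mem ha hb
  neg_mem' := fun ha => neg_mem ha
  mul_mem' := fun _ hb => Ideal.mul_mem_left _ _ hb

lemma closure_le_span {a : Rn n} (ha : a ∈ NonUnitalSubring.closure {ξ n}) :
    a ∈ Ideal.span {ξ n} := by
  have h : NonUnitalSubring.closure {ξ n} ≤ spanNus n :=
    (NonUnitalSubring.closure_le).2 (by
      intro x hx
      rw [Set.mem_singleton_iff] at hx
      subst hx
      exact Ideal.mem_span_singleton.2 dvd_rfl)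
  exact h ha

lemma rep_self {a : Rn n} (ha : a ∈ Ideal.span {ξ n}) :
    a = ∑ i : Fin n, co n ((i:ℕ)+1) a • (ξ n)^((i:ℕ)+1) := by
  conv_lhs => rw [sum_co a]
  rw [Fin.sum_univ_succ]
  have h0 : co n ((0 : Fin (n+1)) : ℕ) a = 0 :=
    co_eq_zero_of_mem (m := 1) (by simp) (by rwa [pow_one])
  rw [h0, zero_smul, zero_add]
  exact Finset.sum_congr rfl fun i _ => by rw [Fin.val_succ]

lemma span_le_closure {a : Rn n} (ha : a ∈ Ideal.span {ξ n}) :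
    a ∈ NonUnitalSubring.closure {ξ n} := by
  rw [rep_self ha]
  exact sum_mem fun i _ => zsmul_mem (xi_pow_mem_closure (i:ℕ)) _

lemma co_sum_rep (c : Fin n → ℤ) (j : Fin n) :
    co n ((j:ℕ)+1) (∑ i : Fin n, c i • (ξ n)^((i:ℕ)+1)) = c j := by
  classical
  rw [co_sum]
  have hterm : ∀ i : Fin n, co n ((j:ℕ)+1) (c i • (ξ n)^((i:ℕ)+1))
      = if i = j then c i else 0 := by
    intro i
    rw [co_smul, co_xi_pow (Nat.succ_le_of_lt i.isLt)]
    by_cases hij : i = j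
    · rw [if_pos (by rw [hij]), if_pos hij, mul_one]
    · rw [if_neg (fun h => hij (Fin.ext (by omega))), if_neg hij, mul_zero]
  rw [Finset.sum_congr rfl fun i _ => hterm i,
    Finset.sum_ite_eq' Finset.univ j c, if_pos (Finset.mem_univ _)]

lemma prod_mem_span {ι : Type*} (s : Finset ι) (f : ι → Rn n)
    (hf : ∀ i ∈ s, f i ∈ Ideal.span {ξ n}) :
    (∏ i ∈ s, f i) ∈ Ideal.span {(ξ n) ^ s.card} := by
  classical
  induction s using Finset.cons_induction with
  | empty => simpa using Ideal.mem_span_singleton.2 (one_dvd 1)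
  | cons a s ha ih =>
    rw [Finset.prod_cons, Finset.card_cons]
    have h1 : f a ∈ Ideal.span {(ξ n) ^ 1} := by
      rw [pow_one]; exact hf a (Finset.mem_cons_self a s)
    have h2 := span_mul_span h1 (ih (fun i hi => hf i (Finset.mem_cons_of_mem hi)))
    rwa [add_comm] at h2

lemma xi_pow_n_ne_zero : (ξ n)^n ≠ 0 := by
  intro h
  have h1 : co n n ((ξ n)^n) = 1 := by rw [co_xi_pow le_rfl, if_pos rfl]
  rw [h, co_zero] at h1
  exact one_ne_zero h1.symm


variable (n) in
abbrev Fc : NonUnitalSubring (Rn n) := NonUnitalSubring.closure {ξ n}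

theorem thm_aux (n : ℕ) (hn : 1 ≤ n) :
    (∀ f : Fin (n + 1) → Rn n, (∀ i, f i ∈ Fc n) → ∏ i, f i = 0) ∧
    (∃ f : Fin n → Rn n, (∀ i, f i ∈ Fc n) ∧ ∏ i, f i ≠ 0) ∧
    (∀ a : Rn n, a ∈ Fc n ↔ ∃! c : Fin n → ℤ, a = ∑ i, c i • (ξ n) ^ ((i : ℕ) + 1)) ∧
    (∃ e : Fc n ≃ (Fin n → ℤ), ∀ a b : Fc n, e (a + a * b + b) = e a + e b) := by

  refine ⟨?_, ?_, ?_, ?_⟩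
  · -- F^{n+1} = 0
    intro f hf
    have h := prod_mem_span (n := n) Finset.univ f
      (fun i _ => closure_le_span (hf i))
    rw [Finset.card_univ, Fintype.card_fin] at h
    exact eq_zero_of_mem_top h
  · -- F^n ≠ 0
    refine ⟨fun _ => ξ n, fun i => NonUnitalSubring.subset_closure rfl, ?_⟩
    rw [Finset.prod_const, Finset.card_univ, Fintype.card_fin]
    exact xi_pow_n_ne_zero
  · -- additive structure
    intro a
    constructor
    · intro haF
      have ha : a ∈ Ideal.span {ξ n} := closure_le_span haF
      refine ⟨fun i => co n ((i:ℕ)+1) a, rep_self ha, ?_⟩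
      intro c hc
      funext j
      rw [show c j = co n ((j:ℕ)+1) (∑ i : Fin n, c i • (ξ n)^((i:ℕ)+1)) from
        (co_sum_rep c j).symm, ← hc]
    · rintro ⟨c, rfl, -⟩
      exact sum_mem fun i _ => zsmul_mem (xi_pow_mem_closure (i:ℕ)) _
  · -- adjoint group
    have hmem : ∀ c : Fin n → ℤ, ((Psi n c : (Rn n)ˣ) : Rn n) - 1 ∈ Fc n := by
      intro c
      have h := Psi_mem (n := n) (c := c) (m := 0) (fun k hk => absurd hk (Nat.not_lt_zero _))
      rw [mem_Hgrp, zero_add, pow_one] at h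
      exact span_le_closure h
    set q' : (Fin n → ℤ) → Fc n := fun c => ⟨((Psi n c : (Rn n)ˣ) : Rn n) - 1, hmem c⟩ with hq'
    have hq'val : ∀ c, ((q' c : Fc n) : Rn n) = ((Psi n c : (Rn n)ˣ) : Rn n) - 1 := fun c => rfl
    have hbij : Function.Bijective q' := by
      constructor
      · intro c c' hcc
        have h1 : ((Psi n c : (Rn n)ˣ) : Rn n) - 1 = ((Psi n c' : (Rn n)ˣ) : Rn n) - 1 := by
          rw [← hq'val, ← hq'val, hcc]
        have hval : ((Psi n c : (Rn n)ˣ) : Rn n) = ((Psi n c' : (Rn n)ˣ) : Rn n) :=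
          sub_left_inj.1 h1
        have haspan : ((Psi n c : (Rn n)ˣ) : Rn n) - 1 ∈ Ideal.span {(ξ n) ^ (0+1)} := by
          rw [zero_add, pow_one]
          exact closure_le_span (hmem c)
        obtain ⟨c₀, -, huniq⟩ := main n 0 (by omega) (((Psi n c : (Rn n)ˣ) : Rn n) - 1) haspan
        have hh1 : c = c₀ := huniq c ⟨fun k hk => absurd hk (Nat.not_lt_zero _), by ring⟩
        have hh2 : c' = c₀ := huniq c' ⟨fun k hk => absurd hk (Nat.not_lt_zero _), by
          rw [← hval]; ring⟩
        rw [hh1, hh2]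
      · intro a
        have ha : ((a : Fc n) : Rn n) ∈ Ideal.span {(ξ n) ^ (0+1)} := by
          rw [zero_add, pow_one]
          exact closure_le_span a.2
        obtain ⟨c, ⟨-, hc⟩, -⟩ := main n 0 (by omega) ((a : Fc n) : Rn n) ha
        refine ⟨c, ?_⟩
        apply Subtype.ext
        rw [hq'val, hc]
        ring
    set g : (Fin n → ℤ) ≃ Fc n := Equiv.ofBijective q' hbij with hg
    refine ⟨g.symm, ?_⟩
    intro a b
    set c := g.symm a with hc
    set c' := g.symm b with hc'
    have hga : q' c = a := by rw [hc]; exact g.apply_symm_apply a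
    have hgb : q' c' = b := by rw [hc']; exact g.apply_symm_apply b
    have hca : ((a : Fc n) : Rn n) = ((Psi n c : (Rn n)ˣ) : Rn n) - 1 := by rw [← hga, hq'val]
    have hcb : ((b : Fc n) : Rn n) = ((Psi n c' : (Rn n)ˣ) : Rn n) - 1 := by rw [← hgb, hq'val]
    have hkey : a + a * b + b = q' (c + c') := by
      apply Subtype.ext
      rw [hq'val, Psi_add, Units.val_mul]
      push_cast
      rw [hca, hcb]
      ring
    rw [hkey]
    show g.symm (g (c + c')) = _
    rw [g.symm_apply_apply]

end Stmt10Aux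
end Stmt10Aux

open Polynomial in
/-- `F_n`, the subring of `ℤ[x]/(x^{n+1})` generated by `x`, is a nilpotent
ring with `F_n^{n+1} = 0` and `F_n^n ≠ 0`, its additive group is free abelian
with basis `x, x², ..., x^n`, and its adjoint group (with `a∘b = a + ab + b`)
is free abelian of rank `n`. -/
theorem stmt_10 (n : ℕ) (hn : 1 ≤ n) :
    let R := Polynomial ℤ ⧸ Ideal.span {(X : Polynomial ℤ) ^ (n + 1)}
    let ξ : R := Ideal.Quotient.mk (Ideal.span {(X : Polynomial ℤ) ^ (n + 1)}) X
    let F : NonUnitalSubring R := NonUnitalSubring.closure {ξ}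
    (∀ f : Fin (n + 1) → R, (∀ i, f i ∈ F) → ∏ i, f i = 0) ∧
    (∃ f : Fin n → R, (∀ i, f i ∈ F) ∧ ∏ i, f i ≠ 0) ∧
    (∀ a : R, a ∈ F ↔ ∃! c : Fin n → ℤ, a = ∑ i, c i • ξ ^ ((i : ℕ) + 1)) ∧
    (∃ e : F ≃ (Fin n → ℤ), ∀ a b : F, e (a + a * b + b) = e a + e b) := by
  intro R ξq F
  exact Stmt10Aux.thm_aux n hn
end

section
/- Let p be a prime, n ≥ 1, and d_1 ≥ d_2 ≥ ... ≥ d_n ≥ 0 integers with d = d_1 + ... + d_n. Then the number of n×n integer matrices M = (m_{i,j}) satisfying: (1) M is upper triangular; (2) all entries are nonnegative; (3) each diagonal entry is strictly greater than every other entry in its column; (4) for each k, the right-shift s^+ of the k-th row (where s^+(v_1,...,v_n) = (0,v_1,...,v_{n-1})) lies in the subgroup of ℤ^n generated by rows k+1 through n; (5) the diagonal is (p^{d_1},...,p^{d_n}); is exactly p^{d - d_1}. -/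
/-- The right shift `s⁺(v₁,...,vₙ) = (0, v₁, ..., v_{n-1})`. -/
def sPlus (n : ℕ) (v : Fin n → ℤ) : Fin n → ℤ := fun j =>
  if h : (j : ℕ) = 0 then 0 else v ⟨(j : ℕ) - 1, by have := j.isLt; omega⟩

namespace Stmt13

/-- integer interval as subtype equiv Fin -/
def intIcoEquiv (lo : ℤ) (N : ℕ) : {c : ℤ // lo ≤ c ∧ c < lo + N} ≃ Fin N where
  toFun c := ⟨(c.1 - lo).toNat, by have := c.2; omega⟩
  invFun i := ⟨lo + i.1, by have := i.2; omega⟩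
  left_inv c := by
    apply Subtype.ext
    have := c.2
    simp only []
    omega
  right_inv i := by
    apply Fin.ext
    have := i.2
    simp only []
    omega

lemma mul_mem_Ico_iff {D : ℤ} (hD : 0 < D) (b c : ℤ) (N : ℕ) :
    (b ≤ c * D ∧ c * D < b + D * N) ↔ (-((-b)/D) ≤ c ∧ c < -((-b)/D) + N) := by
  have h1 : ∀ x : ℤ, b ≤ x * D ↔ -((-b)/D) ≤ x := by
    intro x
    rw [neg_le, Int.le_ediv_iff_mul_le hD, neg_mul, neg_le_neg_iff]
  constructor
  · rintro ⟨hl, hr⟩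
    refine ⟨(h1 c).1 hl, ?_⟩
    by_contra hc
    push_neg at hc
    have : b ≤ (c - N) * D := by
      have := (h1 (c - N)).2 (by omega)
      linarith
    nlinarith
  · rintro ⟨hl, hr⟩
    refine ⟨(h1 c).2 hl, ?_⟩
    have : ¬ b ≤ (c - N) * D := by
      intro h
      have := (h1 (c - N)).1 h
      omega
    push_neg at this
    nlinarith

/-- the set of `c` with `c*D` in a box of width `D*N` has `N` elements -/
noncomputable def mulBoxEquiv {D : ℤ} (hD : 0 < D) (b : ℤ) (N : ℕ) :
    {c : ℤ // b ≤ c * D ∧ c * D < b + D * N} ≃ Fin N :=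
  (Equiv.subtypeEquivRight (fun c => mul_mem_Ico_iff hD b c N)).trans (intIcoEquiv _ N)

/-- telescoping sum for antitone `g` -/
lemma tele_sum (g : ℕ → ℕ) (hg : ∀ i, g (i+1) ≤ g i) :
    ∀ a b, a ≤ b → g b + ∑ j ∈ Finset.Ico a b, (g j - g (j+1)) = g a := by
  intro a b hab
  induction b, hab using Nat.le_induction with
  | base => simp
  | succ b hab ih =>
    rw [Finset.sum_Ico_succ_top hab]
    have hle : g b ≤ g a := by
      clear ih
      induction b, hab using Nat.le_induction with
      | base => exact le_refl _
      | succ b hab ih => exact le_trans (hg b) ih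
    have := hg b
    omega


variable {n : ℕ}

/-- subgroup generated by rows `i` with `k ≤ i` -/
def G (M : Fin n → Fin n → ℤ) (k : ℕ) : AddSubgroup (Fin n → ℤ) :=
  AddSubgroup.closure {v | ∃ i : Fin n, k ≤ (i : ℕ) ∧ v = M i}

lemma G_eq_bot (M : Fin n → Fin n → ℤ) {k : ℕ} (hk : n ≤ k) : G M k = ⊥ := by
  have : {v | ∃ i : Fin n, k ≤ (i : ℕ) ∧ v = M i} = (∅ : Set (Fin n → ℤ)) := by
    ext v
    simp only [Set.mem_setOf_eq, Set.mem_empty_iff_false, iff_false, not_exists]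
    rintro i ⟨hi, -⟩
    exact absurd (lt_of_lt_of_le i.isLt hk) (not_lt.2 hi)
  rw [G, this, AddSubgroup.closure_empty]

lemma G_congr {M M' : Fin n → Fin n → ℤ} {k : ℕ}
    (h : ∀ i : Fin n, k ≤ (i : ℕ) → M i = M' i) : G M k = G M' k := by
  unfold G
  congr 1
  ext v
  constructor <;> rintro ⟨i, hi, rfl⟩
  · exact ⟨i, hi, h i hi⟩
  · exact ⟨i, hi, (h i hi).symm⟩

lemma G_antitone (M : Fin n → Fin n → ℤ) {k l : ℕ} (h : k ≤ l) : G M l ≤ G M k := by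
  apply AddSubgroup.closure_mono
  rintro v ⟨i, hi, rfl⟩
  exact ⟨i, le_trans h hi, rfl⟩

lemma row_mem_G (M : Fin n → Fin n → ℤ) {k : ℕ} {i : Fin n} (h : k ≤ (i : ℕ)) :
    M i ∈ G M k :=
  AddSubgroup.subset_closure ⟨i, h, rfl⟩

lemma sPlus_apply_zero (v : Fin n → ℤ) (j : Fin n) (hj : (j : ℕ) = 0) :
    sPlus n v j = 0 := by rw [sPlus, dif_pos hj]

lemma sPlus_apply (v : Fin n → ℤ) (j : Fin n) (hj : (j : ℕ) ≠ 0) (t : Fin n)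
    (ht : (t : ℕ) = (j : ℕ) - 1) : sPlus n v j = v t := by
  rw [sPlus, dif_neg hj]
  congr 1
  exact Fin.ext ht.symm

/-- elements of `G M k` vanish at coordinates `< k` -/
lemma G_apply_eq_zero {M : Fin n → Fin n → ℤ} {k : ℕ}
    (hM0 : ∀ i j : Fin n, k ≤ (i : ℕ) → (j : ℕ) < (i : ℕ) → M i j = 0)
    {v : Fin n → ℤ} (hv : v ∈ G M k) {j : Fin n} (hj : (j : ℕ) < k) : v j = 0 := by
  have : G M k ≤ AddSubgroup.pi Set.univ
      (fun j' : Fin n => if (j' : ℕ) < k then (⊥ : AddSubgroup ℤ) else ⊤) := by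
    apply AddSubgroup.closure_le _ |>.2
    rintro v ⟨i, hi, rfl⟩
    intro j' _
    simp only []
    split_ifs with hj'
    · simpa using hM0 i j' hi (lt_of_lt_of_le hj' hi)
    · trivial
  have := this hv j (Set.mem_univ j)
  simpa [hj] using this

lemma mem_G_iff {M : Fin n → Fin n → ℤ} {k : ℕ} (hk : k < n) {v : Fin n → ℤ} :
    v ∈ G M k ↔ ∃ c : ℤ, v - c • M ⟨k, hk⟩ ∈ G M (k + 1) := by
  have hset : {v | ∃ i : Fin n, k ≤ (i : ℕ) ∧ v = M i} =
      {M ⟨k, hk⟩} ∪ {v | ∃ i : Fin n, k + 1 ≤ (i : ℕ) ∧ v = M i} := by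
    ext w
    simp only [Set.mem_setOf_eq, Set.mem_union, Set.mem_singleton_iff]
    constructor
    · rintro ⟨i, hi, rfl⟩
      rcases eq_or_lt_of_le hi with h | h
      · have hik : i = ⟨k, hk⟩ := Fin.ext (by simpa using h.symm)
        left; rw [hik]
      · right; exact ⟨i, h, rfl⟩
    · rintro (rfl | ⟨i, hi, rfl⟩)
      · exact ⟨⟨k, hk⟩, le_refl _, rfl⟩
      · exact ⟨i, le_trans (Nat.le_succ k) hi, rfl⟩
  rw [G, hset, AddSubgroup.closure_union, AddSubgroup.mem_sup]
  constructor
  · rintro ⟨a, ha, b, hb, rfl⟩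
    obtain ⟨c, rfl⟩ := AddSubgroup.mem_closure_singleton.1 ha
    exact ⟨c, by simpa [G] using hb⟩
  · rintro ⟨c, hc⟩
    exact ⟨c • M ⟨k, hk⟩, AddSubgroup.mem_closure_singleton.2 ⟨c, rfl⟩,
      v - c • M ⟨k, hk⟩, hc, by abel⟩


lemma filter_succ_sum {k : ℕ} (hk : k < n) (F : Fin n → ℕ) :
    ∑ j ∈ Finset.univ.filter (fun j : Fin n => k ≤ (j : ℕ)), F j
      = F ⟨k, hk⟩ + ∑ j ∈ Finset.univ.filter (fun j : Fin n => k + 1 ≤ (j : ℕ)), F j := by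
  have h : Finset.univ.filter (fun j : Fin n => k ≤ (j : ℕ))
      = insert ⟨k, hk⟩ (Finset.univ.filter (fun j : Fin n => k + 1 ≤ (j : ℕ))) := by
    ext j
    simp only [Finset.mem_filter, Finset.mem_univ, true_and, Finset.mem_insert, Fin.ext_iff]
    omega
  rw [h, Finset.sum_insert (by simp)]

lemma botCase (p : ℕ) (d : Fin n → ℕ) (M : Fin n → Fin n → ℤ)
    (b : Fin n → ℤ) (e : Fin n → ℕ) {k : ℕ} (hkn : n ≤ k) :
    Nonempty ({v : Fin n → ℤ // v ∈ G M k ∧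
        ∀ j : Fin n, k ≤ (j : ℕ) → (b j ≤ v j ∧ v j < b j + (p : ℤ) ^ e j)} ≃
      Fin (p ^ (∑ j ∈ Finset.univ.filter (fun j : Fin n => k ≤ (j : ℕ)), (e j - d j)))) := by
  have hfil : Finset.univ.filter (fun j : Fin n => k ≤ (j : ℕ)) = ∅ := by
    ext j
    simp only [Finset.mem_filter, Finset.mem_univ, true_and, Finset.notMem_empty,
      iff_false, not_le]
    have := j.isLt
    omega
  rw [hfil, Finset.sum_empty, pow_zero]
  have huniq : ∀ v : {v : Fin n → ℤ // v ∈ G M k ∧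
      ∀ j : Fin n, k ≤ (j : ℕ) → (b j ≤ v j ∧ v j < b j + (p : ℤ) ^ e j)}, v.1 = 0 := by
    intro v
    have hv := v.2.1
    simp only [G_eq_bot M hkn, AddSubgroup.mem_bot] at hv
    exact hv
  refine ⟨{
    toFun := fun _ => ⟨0, Nat.one_pos⟩
    invFun := fun _ => ⟨0, zero_mem _,
      fun j hj => absurd hj (by have := j.isLt; omega)⟩
    left_inv := fun v => Subtype.ext (huniq v).symm
    right_inv := fun i => Subsingleton.elim _ _ }⟩

/-- The main box-counting lemma: the number of elements of `G M k` lying in a box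
with side lengths `p^(e j)` (for `j ≥ k`) is `p^(∑_{j ≥ k} (e j - d j))`. -/
lemma box_lemma (p : ℕ) (hp : 1 ≤ p) (d : Fin n → ℕ) (M : Fin n → Fin n → ℤ)
    (m : ℕ) : ∀ k : ℕ, n ≤ k + m → ∀ (b : Fin n → ℤ) (e : Fin n → ℕ),
    (∀ j : Fin n, k ≤ (j : ℕ) → d j ≤ e j) →
    (∀ i j : Fin n, k ≤ (i : ℕ) → (j : ℕ) < (i : ℕ) → M i j = 0) →
    (∀ i : Fin n, k ≤ (i : ℕ) → M i i = (p : ℤ) ^ d i) →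
    Nonempty ({v : Fin n → ℤ // v ∈ G M k ∧
        ∀ j : Fin n, k ≤ (j : ℕ) → (b j ≤ v j ∧ v j < b j + (p : ℤ) ^ e j)} ≃
      Fin (p ^ (∑ j ∈ Finset.univ.filter (fun j : Fin n => k ≤ (j : ℕ)), (e j - d j)))) := by
  induction m with
  | zero =>
    intro k hk b e _ _ _
    exact botCase p d M b e (by omega)
  | succ m ih =>
    intro k hk b e he hM0 hMd
    by_cases hkn : n ≤ k
    · exact botCase p d M b e hkn
    · push_neg at hkn
      set kf : Fin n := ⟨k, hkn⟩ with hkf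
      have hkfv : (kf : ℕ) = k := rfl
      set D : ℤ := (p : ℤ) ^ d kf with hD
      have hDpos : 0 < D := pow_pos (by exact_mod_cast hp) _
      have hMkk : M kf kf = D := hMd kf (le_refl k)
      set N : ℕ := p ^ (e kf - d kf) with hN
      have hwidth : (p : ℤ) ^ e kf = D * N := by
        rw [hD, hN]
        push_cast
        rw [← pow_add]
        congr 1
        have := he kf (le_refl k)
        omega
      have he' : ∀ j : Fin n, k + 1 ≤ (j : ℕ) → d j ≤ e j := fun j hj => he j (by omega)
      have hM0' : ∀ i j : Fin n, k + 1 ≤ (i : ℕ) → (j : ℕ) < (i : ℕ) → M i j = 0 :=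
        fun i j hi => hM0 i j (by omega)
      have hMd' : ∀ i : Fin n, k + 1 ≤ (i : ℕ) → M i i = (p : ℤ) ^ d i :=
        fun i hi => hMd i (by omega)
      set C := {c : ℤ // b kf ≤ c * D ∧ c * D < b kf + D * N} with hC
      set Sfib : C → Type := fun c => {u : Fin n → ℤ // u ∈ G M (k + 1) ∧
        ∀ j : Fin n, k + 1 ≤ (j : ℕ) →
          (b j - c.1 * M kf j ≤ u j ∧ u j < b j - c.1 * M kf j + (p : ℤ) ^ e j)} with hSfib
      have hgmem : ∀ (c : C) (u : Sfib c), (u.1 + c.1 • M kf) ∈ G M k ∧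
          ∀ j : Fin n, k ≤ (j : ℕ) →
            (b j ≤ (u.1 + c.1 • M kf) j ∧ (u.1 + c.1 • M kf) j < b j + (p : ℤ) ^ e j) := by
        intro c u
        constructor
        · rw [mem_G_iff hkn]
          exact ⟨c.1, by simpa [hkf] using u.2.1⟩
        · intro j hj
          rcases eq_or_lt_of_le hj with hjk | hjk
          · have hjkf : j = kf := Fin.ext hjk.symm
            rw [hjkf]
            have hu0 : u.1 kf = 0 :=
              G_apply_eq_zero hM0' u.2.1 (hkfv ▸ Nat.lt_succ_self k)
            simp only [Pi.add_apply, Pi.smul_apply, smul_eq_mul, hu0, zero_add, hMkk, hwidth]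
            exact c.2
          · have hbox := u.2.2 j hjk
            simp only [Pi.add_apply, Pi.smul_apply, smul_eq_mul]
            constructor <;> linarith [hbox.1, hbox.2]
      set g : (Σ c : C, Sfib c) → {v : Fin n → ℤ // v ∈ G M k ∧
          ∀ j : Fin n, k ≤ (j : ℕ) → (b j ≤ v j ∧ v j < b j + (p : ℤ) ^ e j)} :=
        fun x => ⟨x.2.1 + x.1.1 • M kf, hgmem x.1 x.2⟩ with hg
      have hgbij : Function.Bijective g := by
        constructor
        · rintro ⟨c, u⟩ ⟨c', u'⟩ hguu
          have heq : u.1 + c.1 • M kf = u'.1 + c'.1 • M kf := congrArg Subtype.val hguu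
          have hkfe : u.1 kf + c.1 * D = u'.1 kf + c'.1 * D := by
            have := congrFun heq kf
            simpa [hMkk] using this
          have hu0 : u.1 kf = 0 :=
            G_apply_eq_zero hM0' u.2.1 (hkfv ▸ Nat.lt_succ_self k)
          have hu0' : u'.1 kf = 0 :=
            G_apply_eq_zero hM0' u'.2.1 (hkfv ▸ Nat.lt_succ_self k)
          have hcc : c.1 = c'.1 := by
            rw [hu0, hu0', zero_add, zero_add] at hkfe
            exact mul_right_cancel₀ hDpos.ne' hkfe
          have hcc' : c = c' := Subtype.ext hcc
          subst hcc'
          have huu : u = u' := by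
            apply Subtype.ext
            have h2 : u.1 + c.1 • M kf - c.1 • M kf = u'.1 + c.1 • M kf - c.1 • M kf := by
              rw [heq]
            simpa using h2
          rw [huu]
        · rintro ⟨v, hvG, hvbox⟩
          obtain ⟨c, hc⟩ := (mem_G_iff hkn).1 hvG
          have hvkf : v kf = c * D := by
            have h0 : (v - c • M kf) kf = 0 :=
              G_apply_eq_zero hM0' hc (hkfv ▸ Nat.lt_succ_self k)
            simp only [Pi.sub_apply, Pi.smul_apply, smul_eq_mul, hMkk, sub_eq_zero] at h0
            exact h0
          have hcC : b kf ≤ c * D ∧ c * D < b kf + D * N := by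
            have h3 := hvbox kf (le_of_eq hkfv.symm)
            rw [hvkf, hwidth] at h3
            exact h3
          refine ⟨⟨⟨c, hcC⟩, ⟨v - c • M kf, hc, ?_⟩⟩, ?_⟩
          · intro j hj
            have hbox := hvbox j (by omega)
            simp only [Pi.sub_apply, Pi.smul_apply, smul_eq_mul]
            constructor <;> linarith [hbox.1, hbox.2]
          · apply Subtype.ext
            show v - c • M kf + c • M kf = v
            abel
      have E2 : ∀ c : C, Sfib c ≃
          Fin (p ^ (∑ j ∈ Finset.univ.filter (fun j : Fin n => k + 1 ≤ (j : ℕ)), (e j - d j))) :=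
        fun c => Classical.choice
          (ih (k + 1) (by omega) (fun j => b j - c.1 * M kf j) e he' hM0' hMd')
      have hexp : N * p ^ (∑ j ∈ Finset.univ.filter (fun j : Fin n => k + 1 ≤ (j : ℕ)), (e j - d j))
          = p ^ (∑ j ∈ Finset.univ.filter (fun j : Fin n => k ≤ (j : ℕ)), (e j - d j)) := by
        rw [hN, ← pow_add, filter_succ_sum hkn (fun j => e j - d j)]
      exact ⟨(Equiv.ofBijective g hgbij).symm.trans
        ((Equiv.sigmaCongrRight E2).trans
        ((Equiv.sigmaEquivProd C _).trans
        ((Equiv.prodCongr (mulBoxEquiv hDpos (b kf) N) (Equiv.refl _)).trans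
        ((finProdFinEquiv).trans (finCongr hexp)))))⟩

/-- conditions on rows `≥ k` -/
def Ycond (p : ℕ) (d : Fin n → ℕ) (k : ℕ) (M : Fin n → Fin n → ℤ) : Prop :=
  (∀ i : Fin n, (i : ℕ) < k → M i = 0) ∧
  (∀ i j : Fin n, (j : ℕ) < (i : ℕ) → M i j = 0) ∧
  (∀ i j : Fin n, k ≤ (i : ℕ) → (0 ≤ M i j ∧ (i ≠ j → M i j < (p : ℤ) ^ d j))) ∧
  (∀ i : Fin n, k ≤ (i : ℕ) → M i i = (p : ℤ) ^ d i) ∧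
  (∀ i : Fin n, k ≤ (i : ℕ) → sPlus n (M i) ∈ G M ((i : ℕ) + 1))

lemma fin_filter_sum (hn : 0 < n) (a : ℕ) (f : ℕ → ℕ) :
    ∑ j ∈ Finset.univ.filter (fun j : Fin n => a ≤ (j : ℕ)), f (j : ℕ)
      = ∑ t ∈ Finset.Ico a n, f t := by
  apply Finset.sum_nbij' (i := fun j : Fin n => (j : ℕ))
    (j := fun t : ℕ => (⟨min t (n - 1), by omega⟩ : Fin n))
  · intro j hj
    simp only [Finset.mem_filter, Finset.mem_univ, true_and] at hj
    simp only [Finset.mem_Ico]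
    exact ⟨hj, j.isLt⟩
  · intro t ht
    simp only [Finset.mem_Ico] at ht
    simp only [Finset.mem_filter, Finset.mem_univ, true_and]
    omega
  · intro j hj
    apply Fin.ext
    have := j.isLt
    simp only []
    omega
  · intro t ht
    simp only [Finset.mem_Ico] at ht
    simp only []
    omega
  · intro j hj
    rfl

section Fib

variable (p : ℕ) (d : Fin n → ℕ)

/-- the possible `k`-th rows, given the later rows -/
def Fib (k : ℕ) (hk : k < n) (M' : Fin n → Fin n → ℤ) : Type :=
  {r : Fin n → ℤ // (∀ j : Fin n, (j : ℕ) < k → r j = 0) ∧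
    (∀ j : Fin n, 0 ≤ r j ∧ ((⟨k, hk⟩ : Fin n) ≠ j → r j < (p : ℤ) ^ d j)) ∧
    r ⟨k, hk⟩ = (p : ℤ) ^ d ⟨k, hk⟩ ∧
    sPlus n r ∈ G M' (k + 1)}

set_option maxHeartbeats 2000000 in
lemma fib_equiv (hp : 1 ≤ p) (hd : Antitone d) (M' : Fin n → Fin n → ℤ)
    {k : ℕ} (hk : k < n) (hM' : Ycond p d (k + 1) M') :
    Nonempty (Fib p d k hk M' ≃
      Fin (p ^ (∑ j ∈ Finset.univ.filter (fun j : Fin n => (j : ℕ) = k + 1), d j))) := by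
  obtain ⟨hzero, hM0, hbd, hdg, hsh⟩ := hM'
  set kf : Fin n := ⟨k, hk⟩ with hkf
  by_cases hk1 : k + 1 < n
  swap
  · -- k = n - 1 : unique element
    have hkn : k = n - 1 := by omega
    have hfil : Finset.univ.filter (fun j : Fin n => (j : ℕ) = k + 1) = ∅ := by
      ext j
      simp only [Finset.mem_filter, Finset.mem_univ, true_and, Finset.notMem_empty, iff_false]
      have := j.isLt
      omega
    rw [hfil, Finset.sum_empty, pow_zero]
    have hppos : (0:ℤ) < (p:ℤ) ^ d ⟨k, hk⟩ := pow_pos (by exact_mod_cast hp) _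
    set r0 : Fin n → ℤ := fun j => if (j : ℕ) = k then (p : ℤ) ^ d ⟨k, hk⟩ else 0 with hr0
    have hr0val : ∀ j : Fin n, r0 j = if (j : ℕ) = k then (p : ℤ) ^ d ⟨k, hk⟩ else 0 :=
      fun j => rfl
    have hr0mem : (∀ j : Fin n, (j : ℕ) < k → r0 j = 0) ∧
        (∀ j : Fin n, 0 ≤ r0 j ∧ ((⟨k, hk⟩ : Fin n) ≠ j → r0 j < (p : ℤ) ^ d j)) ∧
        r0 ⟨k, hk⟩ = (p : ℤ) ^ d ⟨k, hk⟩ ∧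
        sPlus n r0 ∈ G M' (k + 1) := by
      refine ⟨fun j hj => by rw [hr0val, if_neg (by omega)], fun j => ?_,
        by rw [hr0val, if_pos rfl], ?_⟩
      · rw [hr0val]
        split_ifs with h
        · have hjkf : (⟨k, hk⟩ : Fin n) = j := Fin.ext h.symm
          exact ⟨le_of_lt hppos, fun hne => absurd hjkf hne⟩
        · exact ⟨le_refl 0, fun _ => pow_pos (by exact_mod_cast hp) _⟩
      · have hz : sPlus n r0 = 0 := by
          funext j
          rw [sPlus]
          split_ifs with h
          · rfl
          · rw [Pi.zero_apply, hr0val, if_neg]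
            show ¬((j : ℕ) - 1 = k)
            have := j.isLt
            omega
        rw [hz]
        exact zero_mem _
    have huniq : ∀ r : Fib p d k hk M', r.1 = r0 := by
      rintro ⟨r, h1, h2, h3, h4⟩
      funext j
      show r j = r0 j
      rw [hr0val]
      split_ifs with h
      · have hje : j = (⟨k, hk⟩ : Fin n) := Fin.ext h
        rw [hje, h3]
      · have hjk : (j : ℕ) < k := by have := j.isLt; omega
        exact h1 j hjk
    exact ⟨{
      toFun := fun _ => ⟨0, Nat.one_pos⟩
      invFun := fun _ => ⟨r0, hr0mem⟩
      left_inv := fun r => Subtype.ext (huniq r).symm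
      right_inv := fun i => Subsingleton.elim _ _ }⟩
  · -- main case : k + 1 < n
    set k1 : Fin n := ⟨k + 1, hk1⟩ with hk1f
    have hlastlt : n - 1 < n := by omega
    set lastf : Fin n := ⟨n - 1, hlastlt⟩ with hlastf
    have hppos : (0:ℤ) < (p:ℤ) := by exact_mod_cast hp
    set c₀ : ℤ := (p : ℤ) ^ (d kf - d k1) with hc₀
    have hd01 : d k1 ≤ d kf := hd (by rw [Fin.le_def]; exact Nat.le_succ k)
    have hc₀mul : c₀ * (p : ℤ) ^ d k1 = (p : ℤ) ^ d kf := by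
      rw [hc₀, ← pow_add]
      congr 1
      omega
    have hM'k1 : M' k1 k1 = (p : ℤ) ^ d k1 := hdg k1 (le_refl _)
    set bB : Fin n → ℤ := fun j => -(c₀ * M' k1 j) with hbB
    set eB : Fin n → ℕ := fun j => d ⟨(j : ℕ) - 1, by have := j.isLt; omega⟩ with heB
    have heBval : ∀ (j : Fin n) (t : Fin n), (t : ℕ) = (j : ℕ) - 1 → eB j = d t := by
      intro j t ht
      rw [heB]
      exact congrArg d (Fin.ext ht.symm)
    have hM0w : ∀ i j : Fin n, k + 2 ≤ (i : ℕ) → (j : ℕ) < (i : ℕ) → M' i j = 0 :=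
      fun i j _ hj => hM0 i j hj
    have eqB := Classical.choice (box_lemma p hp d M' n (k + 2) (by omega) bB eB
      (fun j hj => by
        rw [heB]
        exact hd (by rw [Fin.le_def]; exact Nat.sub_le _ _))
      hM0w
      (fun i hi => hdg i (by omega)))
    have hXeq : {x : ℤ // 0 ≤ x ∧ x < (p : ℤ) ^ d lastf} ≃ Fin (p ^ d lastf) := by
      refine (Equiv.subtypeEquivRight (fun x => ?_)).trans (intIcoEquiv 0 (p ^ d lastf))
      push_cast
      rw [zero_add]
    -- forward: membership of shifted row in G (k+2)
    have fwd_mem : ∀ r : Fin n → ℤ, r ⟨k, hk⟩ = (p : ℤ) ^ d ⟨k, hk⟩ →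
        sPlus n r ∈ G M' (k + 1) → sPlus n r - c₀ • M' k1 ∈ G M' (k + 2) := by
      intro r h3 h4
      obtain ⟨c, hc⟩ := (mem_G_iff hk1).1 h4
      have h0 : (sPlus n r - c • M' k1) k1 = 0 :=
        G_apply_eq_zero hM0w hc (by show k + 1 < k + 2; omega)
      have hsp : sPlus n r k1 = (p : ℤ) ^ d kf :=
        (sPlus_apply r k1 (by show k + 1 ≠ 0; omega) kf (by show k = k + 1 - 1; omega)).trans h3
      have hcD : c * (p : ℤ) ^ d k1 = (p : ℤ) ^ d kf := by
        have h0' := h0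
        simp only [Pi.sub_apply, Pi.smul_apply, smul_eq_mul, hM'k1, hsp, sub_eq_zero] at h0'
        exact h0'.symm
      have hcc : c = c₀ := by
        apply mul_right_cancel₀ (a := c) (b := (p : ℤ) ^ d k1)
          (pow_ne_zero _ (ne_of_gt hppos))
        rw [hcD, hc₀mul]
      rw [← hcc]
      exact hc
    -- the forward map
    set F : Fib p d k hk M' →
        ({v : Fin n → ℤ // v ∈ G M' (k + 2) ∧
          ∀ j : Fin n, k + 2 ≤ (j : ℕ) → (bB j ≤ v j ∧ v j < bB j + (p : ℤ) ^ eB j)} ×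
         {x : ℤ // 0 ≤ x ∧ x < (p : ℤ) ^ d lastf}) := fun r =>
      (⟨sPlus n r.1 - c₀ • M' k1, fwd_mem r.1 r.2.2.2.1 r.2.2.2.2, by
        intro j hj
        have hjlt := j.isLt
        have hsp : sPlus n r.1 j = r.1 ⟨(j : ℕ) - 1, by omega⟩ :=
          sPlus_apply r.1 j (by omega) _ rfl
        have hb := r.2.2.1 ⟨(j : ℕ) - 1, by omega⟩
        have hne : (⟨k, hk⟩ : Fin n) ≠ ⟨(j : ℕ) - 1, by omega⟩ := by
          intro hcon
          have h5 : k = (j : ℕ) - 1 := by simpa using congrArg Fin.val hcon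
          omega
        have hub := hb.2 hne
        rw [heBval j ⟨(j : ℕ) - 1, by omega⟩ rfl]
        simp only [Pi.sub_apply, Pi.smul_apply, smul_eq_mul, hsp, hbB]
        constructor <;> linarith [hb.1, hub]⟩,
       ⟨r.1 lastf, by
        have hb := r.2.2.1 lastf
        refine ⟨hb.1, hb.2 ?_⟩
        intro hcon
        have h5 : k = n - 1 := by simpa [hlastf] using congrArg Fin.val hcon
        omega⟩)
    have hFbij : Function.Bijective F := by
      constructor
      · rintro ⟨r, h1, h2, h3, h4⟩ ⟨r', h1', h2', h3', h4'⟩ hFF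
        have hfst : sPlus n r - c₀ • M' k1 = sPlus n r' - c₀ • M' k1 :=
          congrArg Subtype.val (congrArg Prod.fst hFF)
        have hsnd : r lastf = r' lastf := congrArg Subtype.val (congrArg Prod.snd hFF)
        have hspe : ∀ j : Fin n, sPlus n r j = sPlus n r' j := by
          intro j
          have := congrFun hfst j
          simp only [Pi.sub_apply] at this
          linarith
        apply Subtype.ext
        funext j
        show r j = r' j
        have hjlt := j.isLt
        rcases lt_trichotomy ((j : ℕ)) k with hj | hj | hj
        · rw [h1 j hj, h1' j hj]
        · have hje : j = (⟨k, hk⟩ : Fin n) := Fin.ext hj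
          rw [hje, h3, h3']
        · rcases eq_or_lt_of_le (by omega : (j : ℕ) + 1 ≤ n) with hn1 | hn1
          · have hje : j = lastf := Fin.ext (by show (j : ℕ) = n - 1; omega)
            rw [hje]
            exact hsnd
          · have hj1 : (j : ℕ) + 1 < n := by omega
            have := hspe ⟨(j : ℕ) + 1, hj1⟩
            rw [sPlus_apply r _ (by show (j:ℕ) + 1 ≠ 0; omega) j (by show (j:ℕ) = (j:ℕ)+1-1; omega),
              sPlus_apply r' _ (by show (j:ℕ) + 1 ≠ 0; omega) j (by show (j:ℕ) = (j:ℕ)+1-1; omega)] at this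
            exact this
      · rintro ⟨⟨u, huG, hubox⟩, ⟨x, hx⟩⟩
        -- build the row
        set r : Fin n → ℤ := fun j =>
          if (j : ℕ) < k then 0
          else if (j : ℕ) = k then (p : ℤ) ^ d kf
          else if hj : (j : ℕ) = n - 1 then x
          else u ⟨(j : ℕ) + 1, by have := j.isLt; omega⟩ +
            c₀ * M' k1 ⟨(j : ℕ) + 1, by have := j.isLt; omega⟩ with hr
        have hrval : ∀ j : Fin n, r j =
            if (j : ℕ) < k then 0
            else if (j : ℕ) = k then (p : ℤ) ^ d kf
            else if hj : (j : ℕ) = n - 1 then x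
            else u ⟨(j : ℕ) + 1, by have := j.isLt; omega⟩ +
              c₀ * M' k1 ⟨(j : ℕ) + 1, by have := j.isLt; omega⟩ := fun j => rfl
        have hu0 : ∀ j : Fin n, (j : ℕ) < k + 2 → u j = 0 :=
          fun j hj => G_apply_eq_zero hM0w huG hj
        have hM'k10 : ∀ j : Fin n, (j : ℕ) < k + 1 → M' k1 j = 0 := fun j hj => hM0 k1 j hj
        -- evaluation lemmas for r
        have hr0 : ∀ t : Fin n, (t : ℕ) < k → r t = 0 := fun t h => by
          rw [hrval, if_pos h]
        have hrk : ∀ t : Fin n, (t : ℕ) = k → r t = (p : ℤ) ^ d kf := fun t h => by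
          rw [hrval, if_neg (by omega), if_pos h]
        have hrlast : ∀ t : Fin n, k < (t : ℕ) → (t : ℕ) = n - 1 → r t = x :=
          fun t h1 h2 => by rw [hrval, if_neg (by omega), if_neg (by omega), dif_pos h2]
        have hrmid : ∀ t : Fin n, k < (t : ℕ) → (t : ℕ) ≠ n - 1 →
            ∀ s : Fin n, (s : ℕ) = (t : ℕ) + 1 → r t = u s + c₀ * M' k1 s := by
          intro t h1 h2 s hs
          rw [hrval, if_neg (by omega), if_neg (by omega), dif_neg h2]
          congr 1
          · exact congrArg u (Fin.ext (by show (t : ℕ) + 1 = (s : ℕ); omega))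
          · exact congrArg (fun z => c₀ * M' k1 z) (Fin.ext (by show (t : ℕ) + 1 = (s : ℕ); omega))
        -- Fib conditions
        have c1 : ∀ j : Fin n, (j : ℕ) < k → r j = 0 := hr0
        have c3 : r ⟨k, hk⟩ = (p : ℤ) ^ d ⟨k, hk⟩ := hrk ⟨k, hk⟩ rfl
        have c2 : ∀ j : Fin n, 0 ≤ r j ∧ ((⟨k, hk⟩ : Fin n) ≠ j → r j < (p : ℤ) ^ d j) := by
          intro j
          have hjlt := j.isLt
          rcases lt_trichotomy ((j : ℕ)) k with hj | hj | hj
          · rw [hr0 j hj]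
            exact ⟨le_refl 0, fun _ => pow_pos hppos _⟩
          · rw [hrk j hj]
            refine ⟨le_of_lt (pow_pos hppos _), fun hne => absurd (Fin.ext hj : j = ⟨k, hk⟩).symm hne⟩
          · by_cases hjn : (j : ℕ) = n - 1
            · rw [hrlast j hj hjn]
              have hje : j = lastf := Fin.ext (by show (j : ℕ) = n - 1; omega)
              refine ⟨hx.1, fun _ => ?_⟩
              rw [hje]
              exact hx.2
            · have hlt : (j : ℕ) + 1 < n := by omega
              have hval := hrmid j hj hjn ⟨(j : ℕ) + 1, hlt⟩ rfl
              have hb0 := hubox ⟨(j : ℕ) + 1, hlt⟩ (by show k + 2 ≤ (j : ℕ) + 1; omega)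
              have hdd : d (⟨(j : ℕ) + 1 - 1, by omega⟩ : Fin n) = d j :=
                congrArg d (Fin.ext (by show (j : ℕ) + 1 - 1 = (j : ℕ); omega))
              have hb1 : -(c₀ * M' k1 ⟨(j : ℕ) + 1, hlt⟩) ≤ u ⟨(j : ℕ) + 1, hlt⟩ := hb0.1
              have hb2 : u ⟨(j : ℕ) + 1, hlt⟩ <
                  -(c₀ * M' k1 ⟨(j : ℕ) + 1, hlt⟩) + (p : ℤ) ^ d j := by
                rw [← hdd]
                exact hb0.2
              rw [hval]
              refine ⟨by linarith, fun _ => by linarith⟩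
        have hkey : sPlus n r = u + c₀ • M' k1 := by
          funext j
          have hjlt := j.isLt
          simp only [Pi.add_apply, Pi.smul_apply, smul_eq_mul]
          rcases Nat.eq_zero_or_pos (j : ℕ) with hj0 | hj0
          · rw [sPlus_apply_zero r j hj0, hu0 j (by omega), hM'k10 j (by omega)]
            ring
          · rw [sPlus_apply r j (by omega) ⟨(j : ℕ) - 1, by omega⟩ rfl]
            rcases lt_trichotomy ((j : ℕ) - 1) k with h1 | h1 | h1
            · rw [hr0 ⟨(j : ℕ) - 1, by omega⟩ (by show (j : ℕ) - 1 < k; omega),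
                hu0 j (by omega), hM'k10 j (by omega)]
              ring
            · have hje : j = k1 := Fin.ext (by show (j : ℕ) = k + 1; omega)
              rw [hrk ⟨(j : ℕ) - 1, by omega⟩ (by show (j : ℕ) - 1 = k; omega), hje,
                hu0 k1 (by show k + 1 < k + 2; omega), hM'k1, zero_add, hc₀mul]
            · rw [hrmid ⟨(j : ℕ) - 1, by omega⟩ (by show k < (j : ℕ) - 1; omega)
                (by show (j : ℕ) - 1 ≠ n - 1; omega) j (by show (j : ℕ) = (j : ℕ) - 1 + 1; omega)]
        have c4 : sPlus n r ∈ G M' (k + 1) := by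
          rw [hkey]
          exact add_mem (G_antitone M' (Nat.le_succ _) huG)
            (AddSubgroup.zsmul_mem _ (row_mem_G M' (le_refl (k + 1))) c₀)
        refine ⟨⟨r, c1, c2, c3, c4⟩, ?_⟩
        apply Prod.ext
        · apply Subtype.ext
          show sPlus n r - c₀ • M' k1 = u
          rw [hkey]
          exact add_sub_cancel_right u (c₀ • M' k1)
        · apply Subtype.ext
          show r lastf = x
          exact hrlast lastf (by show k < n - 1; omega) rfl
    exact ⟨(Equiv.ofBijective F hFbij).trans ((Equiv.prodCongr eqB hXeq).trans
      (finProdFinEquiv.trans (finCongr (by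
        have hfil1 : Finset.univ.filter (fun j : Fin n => (j : ℕ) = k + 1) = {k1} := by
          ext j
          simp only [Finset.mem_filter, Finset.mem_univ, true_and, Finset.mem_singleton]
          constructor
          · intro h
            exact Fin.ext (by show (j : ℕ) = k + 1; omega)
          · intro h
            rw [h]
        rw [hfil1, Finset.sum_singleton]
        set g : ℕ → ℕ := fun t => d ⟨min t (n - 1), by omega⟩ with hgd
        have hgval : ∀ t, g t = d ⟨min t (n - 1), by omega⟩ := fun t => rfl
        have hg : ∀ i, g (i + 1) ≤ g i := fun i =>
          hd (by rw [Fin.le_def]; show min i (n - 1) ≤ min (i + 1) (n - 1); omega)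
        have hsum1 : ∑ j ∈ Finset.univ.filter (fun j : Fin n => k + 2 ≤ (j : ℕ)), (eB j - d j)
            = ∑ t ∈ Finset.Ico (k + 2) n, (g (t - 1) - g t) := by
          rw [← fin_filter_sum (by omega : 0 < n) (k + 2) (fun t => g (t - 1) - g t)]
          apply Finset.sum_congr rfl
          intro j hj
          simp only [Finset.mem_filter, Finset.mem_univ, true_and] at hj
          have hjlt := j.isLt
          congr 1
          · rw [heBval j ⟨(j : ℕ) - 1, by omega⟩ rfl, hgval]
            exact congrArg d (Fin.ext (by show (j : ℕ) - 1 = min ((j : ℕ) - 1) (n - 1); omega))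
          · rw [hgval]
            exact congrArg d (Fin.ext (by show (j : ℕ) = min (j : ℕ) (n - 1); omega))
        have hsum2 : ∑ t ∈ Finset.Ico (k + 2) n, (g (t - 1) - g t)
            = ∑ s ∈ Finset.Ico (k + 1) (n - 1), (g s - g (s + 1)) := by
          rw [Finset.sum_Ico_eq_sum_range, Finset.sum_Ico_eq_sum_range]
          have hlen : n - (k + 2) = n - 1 - (k + 1) := by omega
          rw [hlen]
          apply Finset.sum_congr rfl
          intro i hi
          simp only [Finset.mem_range] at hi
          congr 1
          · exact congrArg g (by omega)
          · exact congrArg g (by omega)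
        have htele := tele_sum g hg (k + 1) (n - 1) (by omega)
        have hglast : g (n - 1) = d lastf := by
          rw [hgval]
          exact congrArg d (Fin.ext (by show min (n - 1) (n - 1) = n - 1; omega))
        have hgk1 : g (k + 1) = d k1 := by
          rw [hgval]
          exact congrArg d (Fin.ext (by show min (k + 1) (n - 1) = k + 1; omega))
        rw [← pow_add]
        congr 1
        rw [hsum1, hsum2]
        rw [hglast, hgk1] at htele
        omega))))⟩

end Fib

section Main

variable (p : ℕ) (d : Fin n → ℕ)

lemma ycond_bot {k : ℕ} (hk : n ≤ k) :
    Nonempty ({M : Fin n → Fin n → ℤ // Ycond p d k M} ≃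
      Fin (p ^ (∑ j ∈ Finset.univ.filter (fun j : Fin n => k < (j : ℕ)), d j))) := by
  have hfil : Finset.univ.filter (fun j : Fin n => k < (j : ℕ)) = ∅ := by
    ext j
    simp only [Finset.mem_filter, Finset.mem_univ, true_and, Finset.notMem_empty,
      iff_false, not_lt]
    have := j.isLt
    omega
  rw [hfil, Finset.sum_empty, pow_zero]
  have hzero : Ycond p d k (0 : Fin n → Fin n → ℤ) := by
    refine ⟨fun i _ => rfl, fun i j _ => rfl, fun i j hi => absurd (lt_of_lt_of_le i.isLt hk)
      (not_lt.2 hi), fun i hi => absurd (lt_of_lt_of_le i.isLt hk) (not_lt.2 hi),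
      fun i hi => absurd (lt_of_lt_of_le i.isLt hk) (not_lt.2 hi)⟩
  have huniq : ∀ M : {M : Fin n → Fin n → ℤ // Ycond p d k M}, M.1 = 0 := by
    intro M
    funext i
    exact M.2.1 i (lt_of_lt_of_le i.isLt hk)
  exact ⟨{
    toFun := fun _ => ⟨0, Nat.one_pos⟩
    invFun := fun _ => ⟨0, hzero⟩
    left_inv := fun M => Subtype.ext (huniq M).symm
    right_inv := fun i => Subsingleton.elim _ _ }⟩

lemma y_equiv (hp : 1 ≤ p) (hd : Antitone d) (m : ℕ) : ∀ k : ℕ, n ≤ k + m →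
    Nonempty ({M : Fin n → Fin n → ℤ // Ycond p d k M} ≃
      Fin (p ^ (∑ j ∈ Finset.univ.filter (fun j : Fin n => k < (j : ℕ)), d j))) := by
  induction m with
  | zero =>
    intro k hk
    exact ycond_bot p d (by omega)
  | succ m ih =>
    intro k hk
    by_cases hkn' : n ≤ k
    · exact ycond_bot p d hkn'
    · push_neg at hkn'
      set kf : Fin n := ⟨k, hkn'⟩ with hkf
      -- the gluing map
      have hΦcond : ∀ (M' : {M' : Fin n → Fin n → ℤ // Ycond p d (k + 1) M'})
          (r : Fib p d k hkn' M'.1), Ycond p d k (Function.update M'.1 kf r.1) := by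
        rintro ⟨M', h1, h2, h3, h4, h5⟩ ⟨r, c1, c2, c3, c4⟩
        have hupd : ∀ i : Fin n, i ≠ kf → Function.update M' kf r i = M' i :=
          fun i hi => Function.update_of_ne hi r M'
        have hupdk : Function.update M' kf r kf = r := Function.update_self kf r M'
        have hGeq : ∀ t : ℕ, k + 1 ≤ t → G (Function.update M' kf r) t = G M' t := by
          intro t ht
          apply G_congr
          intro i hi
          exact hupd i (fun hcon => by rw [hcon] at hi; show False; simp only [hkf] at hi; omega)
        refine ⟨?_, ?_, ?_, ?_, ?_⟩
        · intro i hi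
          rw [hupd i (fun hcon => by rw [hcon] at hi; simp only [hkf] at hi; omega)]
          exact h1 i (by omega)
        · intro i j hj
          by_cases hik : i = kf
          · rw [hik, hupdk]
            exact c1 j (by rw [hik] at hj; exact hj)
          · rw [hupd i hik]
            exact h2 i j hj
        · intro i j hi
          rcases eq_or_lt_of_le hi with hik | hik
          · have hie : i = kf := Fin.ext hik.symm
            rw [hie, hupdk]
            have := c2 j
            exact ⟨this.1, fun hne => this.2 hne⟩
          · rw [hupd i (fun hcon => by rw [hcon] at hik; simp only [hkf] at hik; omega)]
            exact h3 i j (by omega)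
        · intro i hi
          rcases eq_or_lt_of_le hi with hik | hik
          · have hie : i = kf := Fin.ext hik.symm
            rw [hie, hupdk]
            exact c3
          · rw [hupd i (fun hcon => by rw [hcon] at hik; simp only [hkf] at hik; omega)]
            exact h4 i (by omega)
        · intro i hi
          rcases eq_or_lt_of_le hi with hik | hik
          · have hie : i = kf := Fin.ext hik.symm
            rw [hie, hupdk, hGeq ((kf : ℕ) + 1) (by omega)]
            exact c4
          · rw [hupd i (fun hcon => by rw [hcon] at hik; simp only [hkf] at hik; omega),
              hGeq ((i : ℕ) + 1) (by omega)]
            exact h5 i (by omega)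
      set Φ : (Σ M' : {M' : Fin n → Fin n → ℤ // Ycond p d (k + 1) M'}, Fib p d k hkn' M'.1) →
          {M : Fin n → Fin n → ℤ // Ycond p d k M} :=
        fun x => ⟨Function.update x.1.1 kf x.2.1, hΦcond x.1 x.2⟩ with hΦ
      have hΦbij : Function.Bijective Φ := by
        constructor
        · rintro ⟨⟨M', hM'⟩, ⟨r, hr⟩⟩ ⟨⟨M'', hM''⟩, ⟨r', hr'⟩⟩ hxy
          have heq : Function.update M' kf r = Function.update M'' kf r' :=
            congrArg Subtype.val hxy
          have hMM : M' = M'' := by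
            funext i
            by_cases hik : i = kf
            · rw [hik, hM'.1 kf (by show k < k + 1; omega), hM''.1 kf (by show k < k + 1; omega)]
            · have := congrFun heq i
              rwa [Function.update_of_ne hik, Function.update_of_ne hik] at this
          subst hMM
          have hrr : r = r' := by
            have := congrFun heq kf
            rwa [Function.update_self, Function.update_self] at this
          subst hrr
          rfl
        · rintro ⟨M, h1, h2, h3, h4, h5⟩
          have hMk0 : ∀ j : Fin n, (j : ℕ) < k → M kf j = 0 := fun j hj => h2 kf j hj
          have hGeq : ∀ t : ℕ, k + 1 ≤ t → G (Function.update M kf 0) t = G M t := by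
            intro t ht
            apply G_congr
            intro i hi
            exact Function.update_of_ne
              (fun hcon => by rw [hcon] at hi; simp only [hkf] at hi; omega) 0 M
          have hM'cond : Ycond p d (k + 1) (Function.update M kf (0 : Fin n → ℤ)) := by
            refine ⟨?_, ?_, ?_, ?_, ?_⟩
            · intro i hi
              by_cases hik : i = kf
              · rw [hik]
                exact Function.update_self kf 0 M
              · rw [Function.update_of_ne hik]
                exact h1 i (by
                  rcases Nat.lt_or_ge (i : ℕ) k with h | h
                  · exact h
                  · exfalso
                    exact hik (Fin.ext (by show (i : ℕ) = k; omega)))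
            · intro i j hj
              by_cases hik : i = kf
              · rw [hik, Function.update_self]
                rfl
              · rw [Function.update_of_ne hik]
                exact h2 i j hj
            · intro i j hi
              rw [Function.update_of_ne
                (fun hcon => by rw [hcon] at hi; simp only [hkf] at hi; omega)]
              exact h3 i j (by omega)
            · intro i hi
              rw [Function.update_of_ne
                (fun hcon => by rw [hcon] at hi; simp only [hkf] at hi; omega)]
              exact h4 i (by omega)
            · intro i hi
              rw [Function.update_of_ne
                (fun hcon => by rw [hcon] at hi; simp only [hkf] at hi; omega),
                hGeq ((i : ℕ) + 1) (by omega)]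
              exact h5 i (by omega)
          have hrcond : (∀ j : Fin n, (j : ℕ) < k → M kf j = 0) ∧
              (∀ j : Fin n, 0 ≤ M kf j ∧ ((⟨k, hkn'⟩ : Fin n) ≠ j → M kf j < (p : ℤ) ^ d j)) ∧
              M kf ⟨k, hkn'⟩ = (p : ℤ) ^ d ⟨k, hkn'⟩ ∧
              sPlus n (M kf) ∈ G (Function.update M kf (0 : Fin n → ℤ)) (k + 1) := by
            refine ⟨hMk0, fun j => h3 kf j (le_refl k), h4 kf (le_refl k), ?_⟩
            rw [hGeq (k + 1) (le_refl _)]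
            exact h5 kf (le_refl k)
          refine ⟨⟨⟨Function.update M kf 0, hM'cond⟩, ⟨M kf, hrcond⟩⟩, ?_⟩
          apply Subtype.ext
          show Function.update (Function.update M kf 0) kf (M kf) = M
          funext i
          by_cases hik : i = kf
          · rw [hik, Function.update_self]
          · rw [Function.update_of_ne hik, Function.update_of_ne hik]
      have hsplit : Finset.univ.filter (fun j : Fin n => k < (j : ℕ))
          = Finset.univ.filter (fun j : Fin n => (j : ℕ) = k + 1)
            ∪ Finset.univ.filter (fun j : Fin n => k + 1 < (j : ℕ)) := by
        ext j
        simp only [Finset.mem_filter, Finset.mem_univ, true_and, Finset.mem_union]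
        omega
      have hdisj : Disjoint (Finset.univ.filter (fun j : Fin n => (j : ℕ) = k + 1))
          (Finset.univ.filter (fun j : Fin n => k + 1 < (j : ℕ))) := by
        rw [Finset.disjoint_filter]
        intro j _ hj
        omega
      have hexp : p ^ (∑ j ∈ Finset.univ.filter (fun j : Fin n => k + 1 < (j : ℕ)), d j)
            * p ^ (∑ j ∈ Finset.univ.filter (fun j : Fin n => (j : ℕ) = k + 1), d j)
          = p ^ (∑ j ∈ Finset.univ.filter (fun j : Fin n => k < (j : ℕ)), d j) := by
        rw [← pow_add]
        congr 1
        rw [hsplit, Finset.sum_union hdisj]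
        omega
      have hfib : ∀ M' : {M' : Fin n → Fin n → ℤ // Ycond p d (k + 1) M'},
          Fib p d k hkn' M'.1 ≃
            Fin (p ^ (∑ j ∈ Finset.univ.filter (fun j : Fin n => (j : ℕ) = k + 1), d j)) :=
        fun M' => Classical.choice (fib_equiv p d hp hd M'.1 hkn' M'.2)
      have hih := Classical.choice (ih (k + 1) (by omega))
      exact ⟨(Equiv.ofBijective Φ hΦbij).symm.trans
        ((Equiv.sigmaCongrRight hfib).trans
        ((Equiv.sigmaEquivProd _ _).trans
        ((Equiv.prodCongr hih (Equiv.refl _)).trans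
        (finProdFinEquiv.trans (finCongr hexp)))))⟩

end Main
end Stmt13

/-- The number of `n×n` integer matrices that are upper triangular, with
nonnegative entries, each diagonal entry strictly greater than every other
entry in its column, whose `k`-th row shifted right lies in the subgroup
generated by the later rows, and with diagonal `(p^{d₁},...,p^{dₙ})`
(`d₁ ≥ ... ≥ dₙ`), is `p^{d - d₁}` where `d = d₁ + ... + dₙ`. -/
theorem stmt_13 (p n : ℕ) (hp : p.Prime) (hn : 1 ≤ n) (d : Fin n → ℕ)
    (hd : Antitone d) :
    Nat.card {M : Matrix (Fin n) (Fin n) ℤ //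
      (∀ i j, j < i → M i j = 0) ∧
      (∀ i j, 0 ≤ M i j) ∧
      (∀ i j, i ≠ j → M i j < M j j) ∧
      (∀ k, sPlus n (M k) ∈ AddSubgroup.closure {v | ∃ i, k < i ∧ v = M i}) ∧
      (∀ i, M i i = (p : ℤ) ^ d i)} =
    p ^ (∑ i, d i - d ⟨0, hn⟩) := by
  classical
  have hp1 : 1 ≤ p := hp.pos
  have hset : ∀ (M : Matrix (Fin n) (Fin n) ℤ) (i : Fin n),
      {v : Fin n → ℤ | ∃ t : Fin n, (i : ℕ) + 1 ≤ (t : ℕ) ∧ v = M t} =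
      {v : Fin n → ℤ | ∃ i' : Fin n, i < i' ∧ v = M i'} := by
    intro M i
    ext v
    simp only [Set.mem_setOf_eq]
    constructor
    · rintro ⟨t, h, rfl⟩
      exact ⟨t, by rw [Fin.lt_def]; omega, rfl⟩
    · rintro ⟨t, h, rfl⟩
      exact ⟨t, by rw [Fin.lt_def] at h; omega, rfl⟩
  have hiff : ∀ M : Matrix (Fin n) (Fin n) ℤ,
      ((∀ i j, j < i → M i j = 0) ∧ (∀ i j, 0 ≤ M i j) ∧ (∀ i j, i ≠ j → M i j < M j j) ∧
       (∀ k, sPlus n (M k) ∈ AddSubgroup.closure {v | ∃ i, k < i ∧ v = M i}) ∧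
       (∀ i, M i i = (p : ℤ) ^ d i)) ↔ Stmt13.Ycond p d 0 M := by
    intro M
    have h6 : ∀ i : Fin n, Stmt13.G M ((i : ℕ) + 1) =
        AddSubgroup.closure {v : Fin n → ℤ | ∃ i' : Fin n, i < i' ∧ v = M i'} :=
      fun i => congrArg AddSubgroup.closure (hset M i)
    constructor
    · rintro ⟨hP1, hP2, hP3, hP4, hP5⟩
      refine ⟨fun i hi => absurd hi (by omega),
        fun i j hj => hP1 i j (Fin.lt_def.mpr hj),
        fun i j _ => ⟨hP2 i j, fun hne => by rw [← hP5 j]; exact hP3 i j hne⟩,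
        fun i _ => hP5 i, fun i _ => ?_⟩
      rw [h6 i]
      exact hP4 i
    · rintro ⟨hQ1, hQ2, hQ3, hQ4, hQ5⟩
      refine ⟨fun i j hj => hQ2 i j (Fin.lt_def.mp hj),
        fun i j => (hQ3 i j (Nat.zero_le _)).1,
        fun i j hne => by rw [hQ4 j (Nat.zero_le _)]; exact (hQ3 i j (Nat.zero_le _)).2 hne,
        fun i => ?_, fun i => hQ4 i (Nat.zero_le _)⟩
      have h7 := hQ5 i (Nat.zero_le _)
      rw [h6 i] at h7
      exact h7
  have e1 := Equiv.subtypeEquivRight hiff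
  have e2 := Classical.choice (Stmt13.y_equiv p d hp1 hd n 0 (by omega))
  have hcard : Nat.card {M : Matrix (Fin n) (Fin n) ℤ //
      (∀ i j, j < i → M i j = 0) ∧
      (∀ i j, 0 ≤ M i j) ∧
      (∀ i j, i ≠ j → M i j < M j j) ∧
      (∀ k, sPlus n (M k) ∈ AddSubgroup.closure {v | ∃ i, k < i ∧ v = M i}) ∧
      (∀ i, M i i = (p : ℤ) ^ d i)} =
      p ^ (∑ j ∈ Finset.univ.filter (fun j : Fin n => 0 < (j : ℕ)), d j) :=
    Nat.card_eq_of_equiv_fin (e1.trans e2)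
  have hnotmem : (⟨0, hn⟩ : Fin n) ∉ Finset.univ.filter (fun j : Fin n => 0 < (j : ℕ)) := by
    simp
  have huniv : (Finset.univ : Finset (Fin n))
      = insert (⟨0, hn⟩ : Fin n) (Finset.univ.filter (fun j : Fin n => 0 < (j : ℕ))) := by
    ext j
    simp only [Finset.mem_univ, Finset.mem_insert, Finset.mem_filter, true_and, true_iff,
      Fin.ext_iff]
    show (j : ℕ) = 0 ∨ 0 < (j : ℕ)
    clear hiff hset e1 e2 hcard hnotmem
    omega
  have hsum : ∑ i, d i = d ⟨0, hn⟩
      + ∑ j ∈ Finset.univ.filter (fun j : Fin n => 0 < (j : ℕ)), d j := by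
    conv_lhs => rw [huniv]
    rw [Finset.sum_insert hnotmem]
  have hexp : ∑ j ∈ Finset.univ.filter (fun j : Fin n => 0 < (j : ℕ)), d j
      = ∑ i, d i - d ⟨0, hn⟩ := by
    clear hiff hset e1 e2 hcard hnotmem huniv
    omega
  rw [hcard, hexp]
end

section
/- Let F_2 be the subring of ℤ[x]/(x³) generated by x, viewed as a brace with a∘b = a + ab + b. Every ideal I of the ring F_2 with F_2/I infinite and of multipermutation level 2 equals I_m = ℤ·(m x²) for some m ∈ ℕ \ {1}, and for each such m the multiplicative group (F_2/I_m, ∘) is isomorphic to ℤ × ℤ/m. -/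
/-- The multiplication of the ring `F₂` (the subring of `ℤ[x]/(x³)` generated
by `x`), in coordinates with respect to the basis `x, x²` of its additive
group `ℤ × ℤ`: `x·x = x²`, `x·x² = x²·x = x²·x² = 0`. -/
def mulF2 (a b : ℤ × ℤ) : ℤ × ℤ := (0, a.1 * b.1)

/-- The adjoint (brace) multiplication `a ∘ b = a + b + a·b` on `F₂`. -/
def circF2 (a b : ℤ × ℤ) : ℤ × ℤ := a + b + mulF2 a b

/-- The "triangular number" correction term. -/
def tF2 (a : ℤ) : ℤ := a * (a - 1) / 2

lemma two_tF2 (a : ℤ) : 2 * tF2 a = a * (a - 1) := by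
  have h : (2:ℤ) ∣ a * (a - 1) := by
    have := Int.even_mul_succ_self (a - 1)
    have h2 : (a - 1) * (a - 1 + 1) = a * (a - 1) := by ring
    rw [h2] at this
    exact this.two_dvd
  exact Int.mul_ediv_cancel' h

lemma tF2_add (a c : ℤ) : tF2 (a + c) = tF2 a + tF2 c + a * c := by
  have h : 2 * tF2 (a + c) = 2 * (tF2 a + tF2 c + a * c) := by
    rw [two_tF2, mul_add, mul_add, two_tF2, two_tF2]; ring
  exact mul_left_cancel₀ two_ne_zero h

lemma mem_closure_single (m : ℤ) (z : ℤ × ℤ) :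
    z ∈ AddSubgroup.closure {((0 : ℤ), m)} ↔ ∃ k : ℤ, z = (0, k * m) := by
  rw [AddSubgroup.mem_closure_singleton]
  constructor
  · rintro ⟨k, rfl⟩
    exact ⟨k, by simp [Prod.smul_def, zsmul_eq_mul]⟩
  · rintro ⟨k, rfl⟩
    exact ⟨k, by simp [Prod.smul_def, zsmul_eq_mul]⟩

/-- Every ideal `I` of `F₂` with `F₂/I` infinite of multipermutation level 2
(i.e. `Soc(F₂/I)` is proper and `Soc₂(F₂/I)` is everything) equals
`I_m = ℤ·(m x²)` for some `m ∈ ℕ \ {1}`; and for every such `m` the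
multiplicative group `(F₂/I_m, ∘)` is isomorphic to `ℤ × ℤ/m`. -/
theorem stmt_15 :
    (∀ I : AddSubgroup (ℤ × ℤ), (∀ a : ℤ × ℤ, ∀ y ∈ I, mulF2 a y ∈ I) →
      Infinite ((ℤ × ℤ) ⧸ I) →
      {z : ℤ × ℤ | ∀ a, mulF2 z a ∈ I} ≠ Set.univ →
      (∀ z a : ℤ × ℤ, mulF2 z a ∈ {w : ℤ × ℤ | ∀ b, mulF2 w b ∈ I}) →
      ∃ m : ℕ, m ≠ 1 ∧ I = AddSubgroup.closure {((0 : ℤ), (m : ℤ))}) ∧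
    (∀ m : ℕ, m ≠ 1 →
      ∃ e : ((ℤ × ℤ) ⧸ AddSubgroup.closure {((0 : ℤ), (m : ℤ))}) ≃ ℤ × ZMod m,
        ∀ a b : ℤ × ℤ,
          e (QuotientAddGroup.mk (circF2 a b)) =
            e (QuotientAddGroup.mk a) + e (QuotientAddGroup.mk b)) := by
  constructor
  · intro I hIdeal hInf hSoc _
    -- Key fact: for p ∈ I, all (0, t * p.1) ∈ I.
    have key : ∀ p ∈ I, ∀ t : ℤ, ((0 : ℤ), t * p.1) ∈ I := by
      intro p hp t
      have := hIdeal (t, 0) p hp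
      simpa [mulF2] using this
    -- Step A: every element of I has first coordinate 0.
    have stepA : ∀ p ∈ I, p.1 = 0 := by
      by_contra hA
      push_neg at hA
      obtain ⟨p, hp, hp1⟩ := hA
      set n : ℕ := p.1.natAbs with hn
      have hn0 : n ≠ 0 := Int.natAbs_ne_zero.mpr hp1
      -- multiples of n in second coordinate are in I
      have hmul : ∀ s : ℤ, ((0 : ℤ), s * (n : ℤ)) ∈ I := by
        intro s
        rcases Int.natAbs_eq p.1 with h | h
        · have := key p hp s
          have h2 : s * (n : ℤ) = s * p.1 := by rw [hn]; linear_combination s * h.symm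
          rw [h2]; exact this
        · have := key p hp (-s)
          have h2 : s * (n : ℤ) = -s * p.1 := by rw [hn]; linear_combination s * h
          rw [h2]; exact this
      -- surjection from ZMod n × ZMod n onto the quotient
      have hsurj : Function.Surjective
          (fun cd : ZMod n × ZMod n =>
            (QuotientAddGroup.mk ((cd.1.cast : ℤ), (cd.2.cast : ℤ)) : (ℤ × ℤ) ⧸ I)) := by
        rintro q
        obtain ⟨⟨a, b⟩⟩ := q
        set c : ZMod n := (a : ZMod n) with hc
        have hdvd1 : (n : ℤ) ∣ (c.cast : ℤ) - a := by
          rw [← ZMod.intCast_zmod_eq_zero_iff_dvd]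
          push_cast
          simp [hc]
        obtain ⟨q1, hq1⟩ := hdvd1
        -- express q1 * n as k * p.1
        have hkn : ∃ k : ℤ, k * p.1 = q1 * n := by
          rcases Int.natAbs_eq p.1 with h | h
          · exact ⟨q1, by rw [hn]; linear_combination q1 * h⟩
          · exact ⟨-q1, by rw [hn]; linear_combination (-q1) * h⟩
        obtain ⟨k, hk⟩ := hkn
        set b' : ℤ := b + k * p.2 with hb'
        set d : ZMod n := (b' : ZMod n) with hd
        have hdvd2 : (n : ℤ) ∣ (d.cast : ℤ) - b' := by
          rw [← ZMod.intCast_zmod_eq_zero_iff_dvd]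
          push_cast
          simp [hd]
        obtain ⟨q2, hq2⟩ := hdvd2
        simp only [hb'] at hq2
        refine ⟨(c, d), ?_⟩
        show QuotientAddGroup.mk _ = QuotientAddGroup.mk _
        rw [QuotientAddGroup.eq]
        have hmem : -((c.cast : ℤ), (d.cast : ℤ)) + (a, b)
            = (-k) • p + ((0 : ℤ), (-q2) * (n : ℤ)) := by
          simp only [Prod.smul_def, zsmul_eq_mul, Prod.mk_add_mk, Prod.neg_mk, Prod.ext_iff,
            Prod.fst_add, Prod.snd_add, Prod.fst_neg, Prod.snd_neg, smul_eq_mul]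
          constructor
          · linear_combination -hq1 + hk
          · linear_combination -hq2
        rw [hmem]
        exact I.add_mem (I.zsmul_mem hp (-k)) (hmul (-q2))
      have : Finite ((ℤ × ℤ) ⧸ I) := by
        haveI : NeZero n := ⟨hn0⟩
        exact Finite.of_surjective _ hsurj
      exact not_finite ((ℤ × ℤ) ⧸ I)
    -- Step B: I = {0} × S for a subgroup S of ℤ, which is cyclic.
    obtain ⟨g, hg⟩ := Int.subgroup_cyclic (I.comap (AddMonoidHom.inr ℤ ℤ))
    have hmemS : ∀ b : ℤ, ((0:ℤ), b) ∈ I ↔ ∃ k : ℤ, b = k * g := by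
      intro b
      have : ((0:ℤ), b) ∈ I ↔ b ∈ I.comap (AddMonoidHom.inr ℤ ℤ) := Iff.rfl
      rw [this, hg, AddSubgroup.mem_closure_singleton]
      constructor
      · rintro ⟨k, rfl⟩; exact ⟨k, (zsmul_eq_mul g k).symm⟩
      · rintro ⟨k, rfl⟩; exact ⟨k, zsmul_eq_mul g k⟩
    refine ⟨g.natAbs, ?_, ?_⟩
    · -- m ≠ 1
      intro h1
      apply hSoc
      ext z
      simp only [Set.mem_setOf_eq, Set.mem_univ, iff_true]
      intro a
      have hg1 : ((0:ℤ), g) ∈ I := (hmemS g).mpr ⟨1, by ring⟩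
      have : g = 1 ∨ g = -1 := by
        rcases Int.natAbs_eq g with h | h
        · left; rw [h, h1]; norm_num
        · right; rw [h, h1]; norm_num
      have hone : ((0:ℤ), z.1 * a.1) ∈ I := by
        rcases this with h | h
        · have := (hmemS (z.1 * a.1)).mpr ⟨z.1 * a.1, by rw [h]; ring⟩; exact this
        · have := (hmemS (z.1 * a.1)).mpr ⟨-(z.1 * a.1), by rw [h]; ring⟩; exact this
      simpa [mulF2] using hone
    · -- I = closure {(0, |g|)}
      ext z
      rw [mem_closure_single]
      constructor
      · intro hz
        have h1 : z.1 = 0 := stepA z hz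
        have h2 : ((0:ℤ), z.2) ∈ I := by
          have : z = ((0:ℤ), z.2) := by rw [← h1]
          rwa [this] at hz
        obtain ⟨k, hk⟩ := (hmemS z.2).mp h2
        rcases Int.natAbs_eq g with h | h
        · refine ⟨k, ?_⟩
          refine Prod.ext h1 ?_
          show z.2 = k * (g.natAbs : ℤ)
          rw [hk]; linear_combination k * h
        · refine ⟨-k, ?_⟩
          refine Prod.ext h1 ?_
          show z.2 = -k * (g.natAbs : ℤ)
          rw [hk]; linear_combination k * h
      · rintro ⟨k, rfl⟩
        apply (hmemS _).mpr
        rcases Int.natAbs_eq g with h | h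
        · exact ⟨k, by linear_combination (-k) * h⟩
        · exact ⟨-k, by linear_combination k * h⟩
  · -- Part 2
    intro m _
    set H := AddSubgroup.closure {((0 : ℤ), (m : ℤ))} with hH
    -- the underlying map
    set g : ℤ × ℤ → ℤ × ZMod m := fun p => (p.1, ((p.2 - tF2 p.1 : ℤ) : ZMod m)) with hgdef
    have hresp : ∀ p r : ℤ × ℤ, (QuotientAddGroup.leftRel H) p r → g p = g r := by
      intro p r hpr
      rw [QuotientAddGroup.leftRel_apply] at hpr
      rw [hH, mem_closure_single] at hpr
      obtain ⟨k, hk⟩ := hpr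
      have h1 : r.1 = p.1 := by
        have := congrArg Prod.fst hk
        simp at this
        linarith
      have h2 : r.2 = p.2 + k * m := by
        have := congrArg Prod.snd hk
        simp at this
        linarith
      simp only [hgdef]
      refine Prod.ext h1.symm ?_
      show ((p.2 - tF2 p.1 : ℤ) : ZMod m) = ((r.2 - tF2 r.1 : ℤ) : ZMod m)
      rw [h1, h2]
      push_cast
      simp [ZMod.natCast_self]
    set ebar : ((ℤ × ℤ) ⧸ H) → ℤ × ZMod m :=
      fun q => Quotient.liftOn' q g hresp with hebar
    have hebar_mk : ∀ p : ℤ × ℤ, ebar (QuotientAddGroup.mk p) = g p := fun p => rfl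
    have hinj : Function.Injective ebar := by
      intro q q'
      obtain ⟨p⟩ := q
      obtain ⟨r⟩ := q'
      intro h
      have h' : g p = g r := h
      simp only [hgdef, Prod.mk.injEq] at h'
      obtain ⟨h1, h2⟩ := h'
      have hdvd : (m : ℤ) ∣ r.2 - p.2 := by
        rw [← ZMod.intCast_zmod_eq_zero_iff_dvd]
        rw [h1] at h2
        push_cast at h2 ⊢
        rw [sub_eq_zero]
        linear_combination -h2
      obtain ⟨k, hk⟩ := hdvd
      show QuotientAddGroup.mk p = QuotientAddGroup.mk r
      rw [QuotientAddGroup.eq]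
      rw [hH, mem_closure_single]
      refine ⟨k, ?_⟩
      refine Prod.ext ?_ ?_
      · show -p.1 + r.1 = 0; rw [h1]; ring
      · show -p.2 + r.2 = k * m; rw [mul_comm]; linarith [hk]
    have hsurj : Function.Surjective ebar := by
      rintro ⟨a, c⟩
      obtain ⟨b, hb⟩ := ZMod.intCast_surjective c
      refine ⟨QuotientAddGroup.mk (a, b + tF2 a), ?_⟩
      rw [hebar_mk]
      simp only [hgdef]
      refine Prod.ext rfl ?_
      show (((b + tF2 a) - tF2 a : ℤ) : ZMod m) = c
      rw [add_sub_cancel_right, hb]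
    refine ⟨Equiv.ofBijective ebar ⟨hinj, hsurj⟩, ?_⟩
    intro a b
    show ebar (QuotientAddGroup.mk (circF2 a b))
        = ebar (QuotientAddGroup.mk a) + ebar (QuotientAddGroup.mk b)
    rw [hebar_mk, hebar_mk, hebar_mk]
    simp only [hgdef, circF2, mulF2]
    refine Prod.ext ?_ ?_
    · show a.1 + b.1 + 0 = a.1 + b.1; ring
    · show (((a + b + ((0:ℤ), a.1*b.1)).2 - tF2 (a + b + ((0:ℤ), a.1*b.1)).1 : ℤ) : ZMod m)
          = ((a.2 - tF2 a.1 : ℤ) : ZMod m) + ((b.2 - tF2 b.1 : ℤ) : ZMod m)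
      have h1 : (a + b + ((0:ℤ), a.1*b.1)).1 = a.1 + b.1 := by simp
      have h2 : (a + b + ((0:ℤ), a.1*b.1)).2 = a.2 + b.2 + a.1*b.1 := by simp
      rw [h1, h2, tF2_add]
      push_cast
      ring
end

section
/- Let F_n be the subring of ℤ[x]/(x^{n+1}) generated by x. For every y ∈ x + F_n², there exists a unique ring endomorphism φ_y of F_n with φ_y(x) = y, and φ_y is an automorphism of F_n. -/
open Polynomial

set_option maxHeartbeats 1000000 in
/-- For `F_n` the subring of `ℤ[x]/(x^{n+1})` generated by `x` and any
`y ∈ x + F_n²`, there is a unique (non-unital) ring endomorphism `φ_y` of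
`F_n` with `φ_y(x) = y`, and any such endomorphism is bijective. -/
theorem stmt_16 (n : ℕ) :
    let R := Polynomial ℤ ⧸ Ideal.span {(X : Polynomial ℤ) ^ (n + 1)}
    let ξ : R := Ideal.Quotient.mk (Ideal.span {(X : Polynomial ℤ) ^ (n + 1)}) X
    let F : NonUnitalSubring R := NonUnitalSubring.closure {ξ}
    ∀ (y : R) (hy : y ∈ F),
      y - ξ ∈ AddSubgroup.closure {z : R | ∃ a ∈ F, ∃ b ∈ F, z = a * b} →
      (∃! φ : F →ₙ+* F, φ ⟨ξ, NonUnitalSubring.subset_closure rfl⟩ = ⟨y, hy⟩) ∧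
      (∀ φ : F →ₙ+* F, φ ⟨ξ, NonUnitalSubring.subset_closure rfl⟩ = ⟨y, hy⟩ →
        Function.Bijective φ) := by
  intro R ξ F y hy hy2
  classical
  set J : Ideal (Polynomial ℤ) := Ideal.span {(X : Polynomial ℤ) ^ (n + 1)} with hJ
  set I : Ideal R := Ideal.span {ξ} with hIdef
  -- ξ^(n+1) = 0
  have hξpow : ξ ^ (n + 1) = 0 := by
    show (Ideal.Quotient.mk J X) ^ (n + 1) = 0
    rw [← map_pow, Ideal.Quotient.eq_zero_iff_mem]
    exact Ideal.subset_span rfl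
  -- F ⊆ I
  have hFI : ∀ a ∈ F, a ∈ I := by
    intro a ha
    induction ha using NonUnitalSubring.closure_induction with
    | mem x hx => exact hx ▸ Ideal.subset_span rfl
    | zero => exact zero_mem I
    | add x z hx hz h1 h2 => exact add_mem h1 h2
    | neg x hx h1 => exact neg_mem h1
    | mul x z hx hz h1 h2 => exact I.mul_mem_left x h2
  -- powers of elements of a nonunital subring
  have hpow : ∀ (T : NonUnitalSubring R) (z : R), z ∈ T → ∀ m : ℕ, z ^ (m + 1) ∈ T := by
    intro T z hz m
    induction m with
    | zero => simpa using hz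
    | succ m ih => exact (pow_succ z (m + 1)) ▸ mul_mem ih hz
  have hmkX : Ideal.Quotient.mk J X = ξ := rfl
  have hmkC : ∀ a : ℤ, Ideal.Quotient.mk J (C a) = (a : R) := by
    intro a
    simpa using map_intCast (Ideal.Quotient.mk J) a
  have hcmul : ∀ (T : NonUnitalSubring R) (z : R), z ∈ T → ∀ a : ℤ, (a : R) * z ∈ T := by
    intro T z hz a
    induction a using Int.induction_on with
    | zero => rw [Int.cast_zero, zero_mul]; exact zero_mem T
    | succ i ih => rw [Int.cast_add, Int.cast_one, add_mul, one_mul]; exact add_mem ih hz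
    | pred i ih => rw [Int.cast_sub, Int.cast_one, sub_mul, one_mul]; exact sub_mem ih hz
  -- I ⊆ F
  have hIF : ∀ a ∈ I, a ∈ F := by
    intro a ha
    obtain ⟨u, rfl⟩ := Ideal.mem_span_singleton'.mp ha
    obtain ⟨p, rfl⟩ := Ideal.Quotient.mk_surjective u
    clear ha
    show Ideal.Quotient.mk J p * ξ ∈ F
    induction p using Polynomial.induction_on with
    | C a =>
        rw [hmkC]
        exact hcmul F ξ (NonUnitalSubring.subset_closure rfl) a
    | add p q hp hq =>
        rw [map_add, add_mul]
        exact add_mem hp hq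
    | monomial m a hm =>
        have : (Ideal.Quotient.mk J) (C a * X ^ (m + 1)) * ξ
            = ((Ideal.Quotient.mk J) (C a * X ^ m) * ξ) * ξ := by
          simp only [map_mul, map_pow, hmkX]
          ring
        rw [this]
        exact mul_mem hm (NonUnitalSubring.subset_closure rfl)
  -- y ^ (n+1) = 0
  have hynil : y ^ (n + 1) = 0 := by
    obtain ⟨u, rfl⟩ := Ideal.mem_span_singleton'.mp (hFI y hy)
    rw [mul_pow, hξpow, mul_zero]
  -- the lifted endomorphism of R
  have hker : ∀ p ∈ J, (aeval y).toRingHom p = 0 := by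
    intro p hp
    obtain ⟨q, rfl⟩ := Ideal.mem_span_singleton.mp hp
    simp [map_mul, map_pow, aeval_X, hynil]
  set Φ : R →+* R := Ideal.Quotient.lift J (aeval y).toRingHom hker with hΦdef
  have hΦξ : Φ ξ = y := by
    show Φ (Ideal.Quotient.mk J X) = y
    rw [hΦdef, Ideal.Quotient.lift_mk]
    simp
  have hΦF : ∀ a ∈ F, Φ a ∈ F := by
    intro a ha
    induction ha using NonUnitalSubring.closure_induction with
    | mem x hx => rw [hx, hΦξ]; exact hy
    | zero => rw [map_zero]; exact zero_mem F
    | add x z hx hz h1 h2 => rw [map_add]; exact add_mem h1 h2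
    | neg x hx h1 => rw [map_neg]; exact neg_mem h1
    | mul x z hx hz h1 h2 => rw [map_mul]; exact mul_mem h1 h2
  set φ₀ : F →ₙ+* F :=
    NonUnitalRingHom.codRestrict (Φ.toNonUnitalRingHom.comp (NonUnitalSubringClass.subtype F)) F
      (fun a => hΦF a a.2) with hφ₀def
  have hφ₀ξ : φ₀ ⟨ξ, NonUnitalSubring.subset_closure rfl⟩ = ⟨y, hy⟩ := by
    apply Subtype.ext
    exact hΦξ
  -- uniqueness
  have huniq : ∀ φ ψ : F →ₙ+* F,
      φ ⟨ξ, NonUnitalSubring.subset_closure rfl⟩ = ψ ⟨ξ, NonUnitalSubring.subset_closure rfl⟩ →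
      φ = ψ := by
    intro φ ψ hξeq
    ext a
    obtain ⟨a, ha⟩ := a
    show (φ ⟨a, ha⟩ : R) = (ψ ⟨a, ha⟩ : R)
    induction ha using NonUnitalSubring.closure_induction with
    | mem x hx =>
        subst hx
        exact congrArg _ hξeq
    | zero =>
        have h0 : (⟨0, zero_mem F⟩ : F) = 0 := rfl
        rw [h0, map_zero, map_zero]
    | add x z hx hz h1 h2 =>
        have hadd : (⟨x + z, add_mem hx hz⟩ : F) = ⟨x, hx⟩ + ⟨z, hz⟩ := rfl
        rw [hadd, map_add, map_add]
        push_cast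
        rw [h1, h2]
    | neg x hx h1 =>
        have hneg : (⟨-x, neg_mem hx⟩ : F) = -⟨x, hx⟩ := rfl
        rw [hneg, map_neg, map_neg]
        push_cast
        rw [h1]
    | mul x z hx hz h1 h2 =>
        have hmul : (⟨x * z, mul_mem hx hz⟩ : F) = ⟨x, hx⟩ * ⟨z, hz⟩ := rfl
        rw [hmul, map_mul, map_mul]
        push_cast
        rw [h1, h2]
  -- y - ξ ∈ I^2
  have hc : y - ξ ∈ I ^ 2 := by
    have hsub : {z : R | ∃ a ∈ F, ∃ b ∈ F, z = a * b} ⊆ ((I ^ 2).toAddSubgroup : Set R) := by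
      rintro z ⟨a, ha, b, hb, rfl⟩
      have : a * b ∈ I * I := Ideal.mul_mem_mul (hFI a ha) (hFI b hb)
      rw [pow_two]; exact this
    exact (AddSubgroup.closure_le (I ^ 2).toAddSubgroup).mpr hsub hy2
  -- y^(k+1) - ξ^(k+1) ∈ I^(k+2)
  have hyk : ∀ k : ℕ, y ^ (k + 1) - ξ ^ (k + 1) ∈ I ^ (k + 2) := by
    intro k
    induction k with
    | zero => simpa using hc
    | succ k ih =>
        have heq : y ^ (k + 2) - ξ ^ (k + 2)
            = (y ^ (k + 1) - ξ ^ (k + 1)) * ξ + y ^ (k + 1) * (y - ξ) := by ring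
        rw [heq]
        apply add_mem
        · have : (y ^ (k + 1) - ξ ^ (k + 1)) * ξ ∈ I ^ (k + 2) * I :=
            Ideal.mul_mem_mul ih (Ideal.subset_span rfl)
          rw [show k + 1 + 2 = (k + 2) + 1 by omega, pow_succ I (k + 2)]; exact this
        · have : y ^ (k + 1) * (y - ξ) ∈ I ^ (k + 1) * I ^ 2 :=
            Ideal.mul_mem_mul (Ideal.pow_mem_pow (hFI y hy) (k + 1)) hc
          rw [pow_add I (k + 1) 2]; exact this
  set S : NonUnitalSubring R := NonUnitalSubring.closure {y} with hSdef
  -- descending induction: I^(n+1-j) ⊆ S for j ≤ n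
  have hIS : ∀ j : ℕ, j ≤ n → ∀ z ∈ I ^ (n + 1 - j), z ∈ S := by
    intro j
    induction j with
    | zero =>
        intro _ z hz
        rw [Nat.sub_zero, hIdef, Ideal.span_singleton_pow, hξpow,
          Ideal.span_singleton_eq_bot.mpr rfl] at hz
        rw [Ideal.mem_bot] at hz
        rw [hz]
        exact zero_mem S
    | succ j ihj =>
        intro hj z hz
        have hjn : j ≤ n := Nat.le_of_succ_le hj
        obtain ⟨m, hm⟩ : ∃ m : ℕ, n - j = m + 1 :=
          ⟨n - j - 1, by omega⟩
        have hk1 : n + 1 - j = (n - j) + 1 := by omega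
        have hIH : ∀ w ∈ I ^ ((n - j) + 1), w ∈ S := by
          intro w hw
          exact ihj hjn w (by rwa [hk1])
        have hz' : z ∈ I ^ (n - j) := by rwa [Nat.succ_sub_succ] at hz
        -- ξ^(n-j) ∈ S
       -- using y^(n-j) ∈ S and difference in I^(n-j+1)
        have hξkS : ξ ^ (n - j) ∈ S := by
          have h1 : y ^ (m + 1) ∈ S := hpow S y (NonUnitalSubring.subset_closure rfl) m
          have h2 : y ^ (m + 1) - ξ ^ (m + 1) ∈ S := by
            apply hIH
            rw [hm]
            exact hyk m
          have := sub_mem h1 h2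
          rw [sub_sub_cancel] at this
          rwa [hm]
        -- decompose z
        rw [hIdef, Ideal.span_singleton_pow] at hz'
        obtain ⟨u, rfl⟩ := Ideal.mem_span_singleton'.mp hz'
        obtain ⟨p, rfl⟩ := Ideal.Quotient.mk_surjective u
        have hdecomp : (Ideal.Quotient.mk J p) * ξ ^ (n - j)
            = (Ideal.Quotient.mk J p.divX) * ξ ^ ((n - j) + 1)
              + ((p.coeff 0 : ℤ) : R) * ξ ^ (n - j) := by
          conv_lhs => rw [← Polynomial.X_mul_divX_add p]
          rw [map_add, map_mul]
          rw [hmkC, hmkX]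
          ring
        rw [hdecomp]
        apply add_mem
        · apply hIH
          rw [Ideal.span_singleton_pow]
          exact Ideal.mul_mem_left _ _ (Ideal.subset_span rfl)
        · exact hcmul S _ hξkS _
  have hξS : ξ ∈ S := by
    have : ξ ∈ I ^ (n + 1 - n) := by
      rw [Nat.succ_sub le_rfl, Nat.sub_self, Nat.succ_eq_add_one, zero_add, pow_one I]
      exact Ideal.subset_span rfl
    exact hIS n le_rfl ξ this
  have hFS : ∀ a ∈ F, a ∈ S :=
    fun a ha => NonUnitalSubring.closure_le.mpr (Set.singleton_subset_iff.mpr hξS) ha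
  -- bijectivity
  have hbij : ∀ φ : F →ₙ+* F,
      φ ⟨ξ, NonUnitalSubring.subset_closure rfl⟩ = ⟨y, hy⟩ → Function.Bijective φ := by
    intro φ hφ
    have hsurj : Function.Surjective φ := by
      set T : NonUnitalSubring R := ((NonUnitalSubringClass.subtype F).comp φ).range with hTdef
      have hyT : y ∈ T := by
        refine ⟨⟨ξ, NonUnitalSubring.subset_closure rfl⟩, ?_⟩
        show ((φ ⟨ξ, NonUnitalSubring.subset_closure rfl⟩ : F) : R) = y
        rw [hφ]
      have hST : S ≤ T :=
        NonUnitalSubring.closure_le.mpr (Set.singleton_subset_iff.mpr hyT)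
      intro b
      obtain ⟨a, ha⟩ := hST (hFS (b : R) b.2)
      exact ⟨a, Subtype.ext ha⟩
    have hfin : Module.Finite ℤ R :=
      Module.Finite.of_basis (AdjoinRoot.powerBasis' (monic_X_pow (n + 1))).basis
    have hnoethR : IsNoetherian ℤ R := isNoetherian_of_isNoetherianRing_of_finite ℤ R
    have hnoethF : IsNoetherian ℤ F :=
      isNoetherian_of_injective
        ((NonUnitalSubringClass.subtype F).toAddMonoidHom.toIntLinearMap)
        Subtype.val_injective
    have hinj : Function.Injective φ := by
      have := IsNoetherian.injective_of_surjective_endomorphism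
        (φ.toAddMonoidHom.toIntLinearMap) hsurj
      exact fun a b h => this h
    exact ⟨hinj, hsurj⟩
  exact ⟨⟨φ₀, hφ₀ξ, fun ψ hψ => huniq ψ φ₀ (by rw [hψ, hφ₀ξ])⟩, hbij⟩
end

section
/- Let A = ℤ² / I where I is the subgroup of ℤ² generated by (p^{d_1}, m) and (0, p^{d_2}), for a prime p, integers d_1 ≥ d_2 ≥ 0, and 0 ≤ m < p^{d_2}. Define σ_{(a_1,a_2)}(b_1,b_2) = (b_1 + 1, a_1 + b_1 + b_2) on A. Then each σ_a is a well-defined bijection of A, and the map r(a,b) = (σ_a(b), σ^{-1}_{σ_a(b)}(a)) is an involutive non-degenerate set-theoretic solution to the Yang–Baxter equation (r satisfies the braid relation r_1 r_2 r_1 = r_2 r_1 r_2 and r² = id). -/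
/-- b ↦ (b₁, b₁+b₂) -/
def Lhom : (ℤ × ℤ) →+ (ℤ × ℤ) :=
  AddMonoidHom.mk' (fun b => (b.1, b.1 + b.2)) (by intro x y; simp [Prod.ext_iff]; ring)

/-- a ↦ (0, a₁) -/
def Mhom : (ℤ × ℤ) →+ (ℤ × ℤ) :=
  AddMonoidHom.mk' (fun a => (0, a.1)) (by intro x y; simp [Prod.ext_iff])

/-- a ↦ (a₁, a₂ - a₁) -/
def Nhom : (ℤ × ℤ) →+ (ℤ × ℤ) :=
  AddMonoidHom.mk' (fun a => (a.1, a.2 - a.1)) (by intro x y; simp [Prod.ext_iff]; ring)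

/-- b ↦ (0, -b₁) -/
def Phom : (ℤ × ℤ) →+ (ℤ × ℤ) :=
  AddMonoidHom.mk' (fun b => (0, -b.1)) (by intro x y; simp [Prod.ext_iff]; ring)

/-- On `A = ℤ²/⟨(p^{d₁}, m), (0, p^{d₂})⟩` with `p` prime, `d₁ ≥ d₂ ≥ 0` and
`0 ≤ m < p^{d₂}`, the formula `σ_{(a₁,a₂)}(b₁,b₂) = (b₁+1, a₁+b₁+b₂)` gives
well-defined bijections `σ_a`, and `r(a,b) = (σ_a b, σ⁻¹_{σ_a b} a)` is an
involutive non-degenerate set-theoretic solution of the Yang–Baxter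
equation. -/
theorem stmt_18 (p : ℕ) (hp : p.Prime) (d1 d2 : ℕ) (h12 : d2 ≤ d1)
    (m : ℤ) (hm0 : 0 ≤ m) (hm : m < (p : ℤ) ^ d2) :
    let I : AddSubgroup (ℤ × ℤ) :=
      AddSubgroup.closure {(((p : ℤ) ^ d1, m) : ℤ × ℤ), ((0, (p : ℤ) ^ d2) : ℤ × ℤ)}
    ∃ σ : ((ℤ × ℤ) ⧸ I) → ((ℤ × ℤ) ⧸ I) → ((ℤ × ℤ) ⧸ I),
      (∀ a b : ℤ × ℤ,
        σ (QuotientAddGroup.mk a) (QuotientAddGroup.mk b) =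
          QuotientAddGroup.mk ((b.1 + 1, a.1 + b.1 + b.2) : ℤ × ℤ)) ∧
      (∀ a, Function.Bijective (σ a)) ∧
      ∃ r : ((ℤ × ℤ) ⧸ I) × ((ℤ × ℤ) ⧸ I) → ((ℤ × ℤ) ⧸ I) × ((ℤ × ℤ) ⧸ I),
        (∀ a b, (r (a, b)).1 = σ a b ∧ σ (σ a b) ((r (a, b)).2) = a) ∧
        Function.Bijective r ∧
        (∀ z, r (r z) = z) ∧
        (∀ y, Function.Bijective (fun x => (r (x, y)).2)) ∧
        (∀ x y z,
          (fun t => ((r (t.1, t.2.1)).1, (r (t.1, t.2.1)).2, t.2.2))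
            ((fun t => (t.1, (r (t.2.1, t.2.2)).1, (r (t.2.1, t.2.2)).2))
              ((fun t => ((r (t.1, t.2.1)).1, (r (t.1, t.2.1)).2, t.2.2)) (x, y, z))) =
          (fun t => (t.1, (r (t.2.1, t.2.2)).1, (r (t.2.1, t.2.2)).2))
            ((fun t => ((r (t.1, t.2.1)).1, (r (t.1, t.2.1)).2, t.2.2))
              ((fun t => (t.1, (r (t.2.1, t.2.2)).1, (r (t.2.1, t.2.2)).2)) (x, y, z)))) := by
  intro I
  have hI1 : (((p : ℤ) ^ d1, m) : ℤ × ℤ) ∈ I := AddSubgroup.subset_closure (by simp)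
  have hI2 : (((0 : ℤ), (p : ℤ) ^ d2) : ℤ × ℤ) ∈ I := AddSubgroup.subset_closure (by simp)
  have hI0 : (((0 : ℤ), (p : ℤ) ^ d1) : ℤ × ℤ) ∈ I := by
    have h := AddSubgroup.zsmul_mem I hI2 ((p : ℤ) ^ (d1 - d2))
    have he : ((p : ℤ) ^ (d1 - d2)) • (((0 : ℤ), (p : ℤ) ^ d2) : ℤ × ℤ)
        = (((0 : ℤ), (p : ℤ) ^ d1) : ℤ × ℤ) := by
      simp [Prod.ext_iff, smul_eq_mul, ← pow_add, Nat.sub_add_cancel h12]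
    rwa [he] at h
  have hL : I ≤ I.comap Lhom := by
    refine (AddSubgroup.closure_le _).2 ?_
    rintro x (rfl | rfl) <;> simp only [AddSubgroup.mem_comap, Lhom, AddMonoidHom.mk'_apply]
    · have := AddSubgroup.add_mem I hI1 hI0
      simpa [add_comm] using this
    · simpa using hI2
  have hM : I ≤ I.comap Mhom := by
    refine (AddSubgroup.closure_le _).2 ?_
    rintro x (rfl | rfl) <;> simp only [AddSubgroup.mem_comap, Mhom, AddMonoidHom.mk'_apply]
    · simpa using hI0
    · exact AddSubgroup.zero_mem I
  have hN : I ≤ I.comap Nhom := by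
    refine (AddSubgroup.closure_le _).2 ?_
    rintro x (rfl | rfl) <;> simp only [AddSubgroup.mem_comap, Nhom, AddMonoidHom.mk'_apply]
    · have := AddSubgroup.sub_mem I hI1 hI0
      simpa using this
    · simpa using hI2
  have hP : I ≤ I.comap Phom := by
    refine (AddSubgroup.closure_le _).2 ?_
    rintro x (rfl | rfl) <;> simp only [AddSubgroup.mem_comap, Phom, AddMonoidHom.mk'_apply]
    · simpa using AddSubgroup.neg_mem I hI0
    · exact AddSubgroup.zero_mem I
  set Lbar := QuotientAddGroup.map I I Lhom hL with hLbar
  set Mbar := QuotientAddGroup.map I I Mhom hM with hMbar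
  set Nbar := QuotientAddGroup.map I I Nhom hN with hNbar
  set Pbar := QuotientAddGroup.map I I Phom hP with hPbar
  set e : (ℤ × ℤ) ⧸ I := QuotientAddGroup.mk ((1, 0) : ℤ × ℤ) with he
  set σ : ((ℤ × ℤ) ⧸ I) → ((ℤ × ℤ) ⧸ I) → ((ℤ × ℤ) ⧸ I) :=
    fun a b => Lbar b + Mbar a + e with hσdef
  set r : ((ℤ × ℤ) ⧸ I) × ((ℤ × ℤ) ⧸ I) → ((ℤ × ℤ) ⧸ I) × ((ℤ × ℤ) ⧸ I) :=
    fun z => (σ z.1 z.2, Nbar z.1 + Pbar z.2 - e) with hrdef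
  have hσ : ∀ a b : ℤ × ℤ,
      σ (QuotientAddGroup.mk a) (QuotientAddGroup.mk b)
        = QuotientAddGroup.mk ((b.1 + 1, a.1 + b.1 + b.2) : ℤ × ℤ) := by
    intro a b
    show Lbar (QuotientAddGroup.mk b) + Mbar (QuotientAddGroup.mk a) + e = _
    rw [hLbar, hMbar, QuotientAddGroup.map_mk, QuotientAddGroup.map_mk, he,
      ← QuotientAddGroup.mk_add, ← QuotientAddGroup.mk_add]
    congr 1
    simp [Lhom, Mhom, Prod.ext_iff]; ring
  have hτ : ∀ a b : ℤ × ℤ,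
      Nbar (QuotientAddGroup.mk a) + Pbar (QuotientAddGroup.mk b) - e
        = QuotientAddGroup.mk ((a.1 - 1, a.2 - a.1 - b.1) : ℤ × ℤ) := by
    intro a b
    rw [hNbar, hPbar, QuotientAddGroup.map_mk, QuotientAddGroup.map_mk, he,
      ← QuotientAddGroup.mk_add, ← QuotientAddGroup.mk_sub]
    congr 1
    simp [Nhom, Phom, Prod.ext_iff]; ring
  have hr : ∀ a b : ℤ × ℤ,
      r (QuotientAddGroup.mk a, QuotientAddGroup.mk b)
        = (QuotientAddGroup.mk ((b.1 + 1, a.1 + b.1 + b.2) : ℤ × ℤ),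
           QuotientAddGroup.mk ((a.1 - 1, a.2 - a.1 - b.1) : ℤ × ℤ)) := by
    intro a b
    exact Prod.ext (hσ a b) (hτ a b)
  have hLN : ∀ x : (ℤ × ℤ) ⧸ I, Lbar (Nbar x) = x := by
    intro x
    refine QuotientAddGroup.induction_on x fun a => ?_
    rw [hNbar, hLbar, QuotientAddGroup.map_mk, QuotientAddGroup.map_mk]
    congr 1
    simp [Lhom, Nhom, Prod.ext_iff]
  have hNL : ∀ x : (ℤ × ℤ) ⧸ I, Nbar (Lbar x) = x := by
    intro x
    refine QuotientAddGroup.induction_on x fun a => ?_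
    rw [hNbar, hLbar, QuotientAddGroup.map_mk, QuotientAddGroup.map_mk]
    congr 1
    simp [Lhom, Nhom, Prod.ext_iff]
  refine ⟨σ, hσ, ?_, r, ?_, ?_, ?_, ?_, ?_⟩
  · -- σ a bijective
    intro a
    refine Function.bijective_iff_has_inverse.2 ⟨fun c => Nbar (c - Mbar a - e), ?_, ?_⟩
    · intro b
      show Nbar (Lbar b + Mbar a + e - Mbar a - e) = b
      rw [show Lbar b + Mbar a + e - Mbar a - e = Lbar b by abel, hNL]
    · intro c
      show Lbar (Nbar (c - Mbar a - e)) + Mbar a + e = c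
      rw [hLN]; abel
  · -- r properties
    intro a b
    refine ⟨rfl, ?_⟩
    refine QuotientAddGroup.induction_on a fun a => ?_
    refine QuotientAddGroup.induction_on b fun b => ?_
    have h2 : (r (QuotientAddGroup.mk a, QuotientAddGroup.mk b)).2
        = QuotientAddGroup.mk ((a.1 - 1, a.2 - a.1 - b.1) : ℤ × ℤ) := by rw [hr]
    rw [hσ a b, h2, hσ]
    exact congrArg _ (by simp [Prod.ext_iff] <;> omega)
  · -- bijectivity of r
    refine Function.bijective_iff_has_inverse.2 ⟨r, ?_, ?_⟩ <;>
    · intro z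
      obtain ⟨a, b⟩ := z
      refine QuotientAddGroup.induction_on a fun a => ?_
      refine QuotientAddGroup.induction_on b fun b => ?_
      rw [hr, hr]
      simp only [Prod.mk.injEq]
      refine ⟨congrArg _ ?_, congrArg _ ?_⟩ <;> simp [Prod.ext_iff] <;> omega
  · -- involutivity
    intro z
    obtain ⟨a, b⟩ := z
    refine QuotientAddGroup.induction_on a fun a => ?_
    refine QuotientAddGroup.induction_on b fun b => ?_
    rw [hr, hr]
    simp only [Prod.mk.injEq]
    refine ⟨congrArg _ ?_, congrArg _ ?_⟩ <;> simp [Prod.ext_iff] <;> omega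
  · -- non-degeneracy
    intro y
    refine Function.bijective_iff_has_inverse.2 ⟨fun c => Lbar (c - Pbar y + e), ?_, ?_⟩
    · intro x
      show Lbar (Nbar x + Pbar y - e - Pbar y + e) = x
      rw [show Nbar x + Pbar y - e - Pbar y + e = Nbar x by abel, hLN]
    · intro c
      show Nbar (Lbar (c - Pbar y + e)) + Pbar y - e = c
      rw [hNL]; abel
  · -- braid relation
    intro x y z
    refine QuotientAddGroup.induction_on x fun x => ?_
    refine QuotientAddGroup.induction_on y fun y => ?_
    refine QuotientAddGroup.induction_on z fun z => ?_
    simp only [hr, hσ, hτ, Prod.mk.injEq]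
    refine ⟨congrArg _ ?_, congrArg _ ?_, congrArg _ ?_⟩ <;> simp [Prod.ext_iff] <;> omega
end

section
/- Let A be a finite brace of order p^n (p prime) whose additive group is cyclic, identified with ℤ/p^n, with multiplication a∘b = a + b + p^k a b for some k ∈ ℕ. Then for z ∈ A, the map λ_z : b ↦ -z + z∘b = b + p^k z b is an automorphism of the multiplicative group (A,∘) if and only if k = 0, or 2k ≥ n, or p^{n-2k} divides z. -/
/-!
Writing `c = p^k z`, the map is `λ_z(b) = (1 + c) b`, which is bijective because `1 + c` is a unit.
Expanding both sides, `λ_z(a ∘ b) - λ_z(a) ∘ λ_z(b) = -p^k c (1 + c) a b`, so `λ_z` is a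
homomorphism exactly when `p^{2k} z = 0` in `ℤ/p^n`, i.e. when `p^{n-2k} ∣ z`. The case `k = 0`
is degenerate: then `1 + a` is a unit for `a = -1`, so `ℤ/p^n` is the zero ring.
-/

section CommRing

variable {R : Type*} [CommRing R]

theorem bijective_add_mul_self {c : R} (hc : IsUnit (1 + c)) :
    Function.Bijective fun b : R => b + c * b := by
  have hmul : (fun b : R => b + c * b) = fun b => (1 + c) * b := by
    funext b; ring
  rw [hmul]
  exact Units.mulLeft_bijective hc.unit

theorem forall_add_mul_self_circ_iff {q c : R} (hc : IsUnit (1 + c)) :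
    (∀ a b : R, (a + b + q * a * b) + c * (a + b + q * a * b) =
        (a + c * a) + (b + c * b) + q * (a + c * a) * (b + c * b)) ↔ q * c = 0 := by
  have defect : ∀ a b : R, (a + b + q * a * b) + c * (a + b + q * a * b) =
      (a + c * a) + (b + c * b) + q * (a + c * a) * (b + c * b) - q * c * (1 + c) * (a * b) := by
    intro a b; ring
  simp only [defect, sub_eq_self]
  constructor
  · intro h
    simpa using hc.mul_left_eq_zero.mp (by simpa using h 1 1)
  · intro h a b
    rw [h, zero_mul, zero_mul]

theorem subsingleton_of_forall_isUnit_one_add (h : ∀ a : R, IsUnit (1 + a)) : Subsingleton R :=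
  subsingleton_of_zero_eq_one (isUnit_zero_iff.mp (by simpa using h (-1)))

end CommRing

theorem ZMod.natCast_pow_mul_eq_zero_iff {p : ℕ} (hp : p ≠ 0) (n m : ℕ) (z : ZMod (p ^ n)) :
    (p : ZMod (p ^ n)) ^ m * z = 0 ↔ (p : ZMod (p ^ n)) ^ (n - m) ∣ z := by
  have : NeZero (p ^ n) := ⟨pow_ne_zero n hp⟩
  have hpn : (p : ZMod (p ^ n)) ^ n = 0 := by exact_mod_cast ZMod.natCast_self (p ^ n)
  rcases le_total n m with hnm | hmn
  · rw [← pow_mul_pow_sub _ hnm, hpn, Nat.sub_eq_zero_of_le hnm]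
    simp
  constructor
  · intro h
    have hval : p ^ m * p ^ (n - m) ∣ p ^ m * z.val := by
      rw [pow_mul_pow_sub p hmn, ← ZMod.natCast_eq_zero_iff]
      simpa using h
    simpa using map_dvd (Nat.castRingHom (ZMod (p ^ n)))
      (Nat.dvd_of_mul_dvd_mul_left (pow_pos (Nat.pos_of_ne_zero hp) m) hval)
  · rintro ⟨w, rfl⟩
    rw [← mul_assoc, pow_mul_pow_sub _ hmn, hpn, zero_mul]

/-- On the brace `A = ℤ/p^n` with `a∘b = a + b + p^k a b` (the hypothesis
`hgroup` says `(A,∘)` is indeed a group), the map `λ_z : b ↦ b + p^k z b` is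
an automorphism of the multiplicative group `(A,∘)` if and only if `k = 0`,
or `2k ≥ n`, or `p^{n-2k}` divides `z`. -/
theorem stmt_19 (p n k : ℕ) (hp : p.Prime)
    (hgroup : ∀ a : ZMod (p ^ n), IsUnit (1 + (p : ZMod (p ^ n)) ^ k * a))
    (z : ZMod (p ^ n)) :
    (Function.Bijective (fun b : ZMod (p ^ n) => b + (p : ZMod (p ^ n)) ^ k * z * b) ∧
      ∀ a b : ZMod (p ^ n),
        (fun b : ZMod (p ^ n) => b + (p : ZMod (p ^ n)) ^ k * z * b)
            (a + b + (p : ZMod (p ^ n)) ^ k * a * b) =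
          (fun b : ZMod (p ^ n) => b + (p : ZMod (p ^ n)) ^ k * z * b) a +
            (fun b : ZMod (p ^ n) => b + (p : ZMod (p ^ n)) ^ k * z * b) b +
            (p : ZMod (p ^ n)) ^ k *
              ((fun b : ZMod (p ^ n) => b + (p : ZMod (p ^ n)) ^ k * z * b) a) *
              ((fun b : ZMod (p ^ n) => b + (p : ZMod (p ^ n)) ^ k * z * b) b)) ↔
    (k = 0 ∨ n ≤ 2 * k ∨ (p : ZMod (p ^ n)) ^ (n - 2 * k) ∣ z) := by
  beta_reduce
  rw [and_iff_right (bijective_add_mul_self (hgroup z)), forall_add_mul_self_circ_iff (hgroup z),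
    ← mul_assoc, ← pow_add, ← two_mul, ZMod.natCast_pow_mul_eq_zero_iff hp.ne_zero]
  refine ⟨fun h => Or.inr (Or.inr h), ?_⟩
  rintro (rfl | hn | h)
  · have := subsingleton_of_forall_isUnit_one_add (by simpa using hgroup)
    exact ⟨0, Subsingleton.elim _ _⟩
  · rw [Nat.sub_eq_zero_of_le hn, pow_zero]
    exact one_dvd z
  · exact h
end
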